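/- arXiv:2602.22181 — 10 statements merged into one kernel-verified Lean document; each statement's English description precedes it below -/
import Mathlib

section
/- Every homogeneous triangle-free graph on a countably infinite vertex set is isomorphic to one of exactly four graphs: (a) the graph with no edges on a countably infinite set; (b) a countably infinite disjoint union of single edges (a perfect matching); (c) the complete bipartite graph with two countably infinite parts; (d) Henson's graph H_3, i.e. a graph satisfying the triangle-free extension property. -/
/-- A graph is homogeneous if every isomorphism between finite induced subgraphs
extends to an automorphism. -/
def SimpleGraph.IsHomogeneous {V : Type*} (Γ : SimpleGraph V) : Prop :=
  ∀ (A : Finset V) (f : V → V), Set.InjOn f A →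
    (∀ x ∈ A, ∀ y ∈ A, (Γ.Adj x y ↔ Γ.Adj (f x) (f y))) →
    ∃ g : Γ ≃g Γ, ∀ x ∈ A, g x = f x
/-- Disjoint union of complete graphs: parts indexed by `K`, each part a copy of the
complete graph on `L`. -/
def unionOfCompletes (K L : Type*) : SimpleGraph (K × L) where
  Adj a b := a.1 = b.1 ∧ a ≠ b
  symm := ⟨fun _ _ ⟨h1, h2⟩ => ⟨h1.symm, h2.symm⟩⟩
  loopless := ⟨fun _ h => h.2 rfl⟩
/-- The triangle-free extension property characterising Henson's graph `H₃`. -/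
def SimpleGraph.HasTriangleFreeExtensionProperty {V : Type*} (Γ : SimpleGraph V) : Prop :=
  Γ.CliqueFree 3 ∧
  ∀ U W : Finset V, Disjoint U W → (∀ u ∈ U, ∀ v ∈ U, ¬ Γ.Adj u v) →
    ∃ z, z ∉ U ∧ z ∉ W ∧ (∀ u ∈ U, Γ.Adj z u) ∧ (∀ w ∈ W, ¬ Γ.Adj z w)

noncomputable section

namespace WoodrowProof

open SimpleGraph

variable {V : Type} {Γ : SimpleGraph V}

/-- independence of a finset of vertices -/
def Ind (Γ : SimpleGraph V) (s : Finset V) : Prop := ∀ x ∈ s, ∀ y ∈ s, ¬ Γ.Adj x y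


lemma ind_singleton (Γ : SimpleGraph V) (a : V) : Ind Γ {a} := by
  intro x hx y hy
  rw [Finset.mem_singleton] at hx hy
  subst hx; subst hy
  exact Γ.loopless.irrefl _

lemma ind_insert [DecidableEq V] {w : V} {s : Finset V} (hs : Ind Γ s) (hw : ∀ x ∈ s, ¬Γ.Adj w x) :
    Ind Γ (insert w s) := by
  intro x hx y hy
  rcases Finset.mem_insert.mp hx with hx1 | hx1
  · rcases Finset.mem_insert.mp hy with hy1 | hy1
    · subst hx1; subst hy1; exact Γ.loopless.irrefl _
    · subst hx1; exact hw y hy1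
  · rcases Finset.mem_insert.mp hy with hy1 | hy1
    · subst hy1; exact fun h => hw x hx1 h.symm
    · exact hs x hx1 y hy1

lemma tf3 (htf : Γ.CliqueFree 3) {a b c : V} (hab : Γ.Adj a b) (hac : Γ.Adj a c)
    (hbc : Γ.Adj b c) : False := by
  classical
  exact htf {a, b, c} (SimpleGraph.is3Clique_triple_iff.mpr ⟨hab, hac, hbc⟩)

/-! ### Transfer lemmas from homogeneity -/

lemma exists_auto_single (hom : Γ.IsHomogeneous) (a c : V) : ∃ g : Γ ≃g Γ, g a = c := by
  obtain ⟨g, hg⟩ := hom {a} (fun _ => c)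
    (fun x hx y hy _ => by
      simp only [Finset.coe_singleton, Set.mem_singleton_iff] at hx hy; rw [hx, hy])
    (by
      intro x hx y hy
      simp only [Finset.mem_singleton] at hx hy
      subst hx; subst hy
      exact iff_of_false (Γ.loopless.irrefl _) (Γ.loopless.irrefl c))
  exact ⟨g, hg a (Finset.mem_singleton_self a)⟩

lemma exists_auto_pair (hom : Γ.IsHomogeneous) {a b c d : V} (hab : a ≠ b) (hcd : c ≠ d)
    (h : Γ.Adj a b ↔ Γ.Adj c d) : ∃ g : Γ ≃g Γ, g a = c ∧ g b = d := by
  classical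
  set f : V → V := fun x => if x = a then c else if x = b then d else x with hf
  have hfa : f a = c := by simp [hf]
  have hfb : f b = d := by simp [hf, hab.symm]
  have hinj : Set.InjOn f ↑({a, b} : Finset V) := by
    intro x hx y hy hxy
    simp only [Finset.coe_insert, Set.mem_insert_iff, Finset.coe_singleton,
      Set.mem_singleton_iff] at hx hy
    rcases hx with rfl | rfl
    · rcases hy with rfl | rfl
      · rfl
      · rw [hfa, hfb] at hxy; exact absurd hxy hcd
    · rcases hy with rfl | rfl
      · rw [hfb, hfa] at hxy; exact absurd hxy.symm hcd
      · rfl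
  have hadj : ∀ x ∈ ({a, b} : Finset V), ∀ y ∈ ({a, b} : Finset V),
      (Γ.Adj x y ↔ Γ.Adj (f x) (f y)) := by
    intro x hx y hy
    simp only [Finset.mem_insert, Finset.mem_singleton] at hx hy
    rcases hx with rfl | rfl
    · rcases hy with rfl | rfl
      · rw [hfa]; exact iff_of_false (Γ.loopless.irrefl _) (Γ.loopless.irrefl _)
      · rw [hfa, hfb]; exact h
    · rcases hy with rfl | rfl
      · rw [hfb, hfa, Γ.adj_comm, Γ.adj_comm d c]; exact h
      · rw [hfb]; exact iff_of_false (Γ.loopless.irrefl _) (Γ.loopless.irrefl _)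
  obtain ⟨g, hg⟩ := hom {a, b} f hinj hadj
  exact ⟨g, by rw [hg a (by simp), hfa], by rw [hg b (by simp), hfb]⟩

lemma exists_auto_moveOne (hom : Γ.IsHomogeneous) (s : Finset V) {u p : V}
    (hus : u ∉ s) (hps : p ∉ s)
    (hu : ∀ x ∈ s, ¬ Γ.Adj u x) (hp : ∀ x ∈ s, ¬ Γ.Adj p x) :
    ∃ g : Γ ≃g Γ, g u = p ∧ ∀ x ∈ s, g x = x := by
  classical
  set f : V → V := fun x => if x = u then p else x with hf
  have hfu : f u = p := by simp [hf]
  have hfx : ∀ x ∈ s, f x = x := by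
    intro x hx
    rw [hf]
    exact if_neg (fun (h : x = u) => hus (h ▸ hx))
  have hinj : Set.InjOn f ↑(insert u s) := by
    intro x hx y hy hxy
    simp only [Finset.coe_insert, Set.mem_insert_iff, Finset.mem_coe] at hx hy
    rcases hx with rfl | hx
    · rcases hy with rfl | hy
      · rfl
      · rw [hfu, hfx y hy] at hxy; exact absurd (hxy.symm ▸ hy) hps
    · rcases hy with rfl | hy
      · rw [hfu, hfx x hx] at hxy; exact absurd (hxy ▸ hx) hps
      · rwa [hfx x hx, hfx y hy] at hxy
  have hadj : ∀ x ∈ insert u s, ∀ y ∈ insert u s, (Γ.Adj x y ↔ Γ.Adj (f x) (f y)) := by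
    intro x hx y hy
    simp only [Finset.mem_insert] at hx hy
    rcases hx with rfl | hx
    · rcases hy with rfl | hy
      · rw [hfu]; exact iff_of_false (Γ.loopless.irrefl _) (Γ.loopless.irrefl _)
      · rw [hfu, hfx y hy]; exact iff_of_false (hu y hy) (hp y hy)
    · rcases hy with rfl | hy
      · rw [hfu, hfx x hx]
        exact iff_of_false (fun hxu => hu x hx hxu.symm) (fun hxp => hp x hx hxp.symm)
      · rw [hfx x hx, hfx y hy]
  obtain ⟨g, hg⟩ := hom (insert u s) f hinj hadj
  exact ⟨g, by rw [hg u (Finset.mem_insert_self u s), hfu],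
    fun x hx => by rw [hg x (Finset.mem_insert_of_mem hx), hfx x hx]⟩

lemma exists_auto_indepMap (hom : Γ.IsHomogeneous) {s t : Finset V}
    (hs : Ind Γ s) (ht : Ind Γ t) (hcard : s.card = t.card) :
    ∃ g : Γ ≃g Γ, (∀ x ∈ s, g x ∈ t) ∧ (∀ y ∈ t, ∃ x ∈ s, g x = y) := by
  classical
  have hc : Fintype.card ↥s = Fintype.card ↥t := by
    simpa [Fintype.card_coe] using hcard
  set e : ↥s ≃ ↥t := Fintype.equivOfCardEq hc with he
  set f : V → V := fun x => if hx : x ∈ s then (e ⟨x, hx⟩ : V) else x with hfdef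
  have hf : ∀ x (hx : x ∈ s), f x = (e ⟨x, hx⟩ : V) := fun x hx => dif_pos hx
  have hft : ∀ x (hx : x ∈ s), f x ∈ t := fun x hx => by rw [hf x hx]; exact (e ⟨x, hx⟩).2
  have hinj : Set.InjOn f ↑s := by
    intro x hx y hy hxy
    simp only [Finset.mem_coe] at hx hy
    rw [hf x hx, hf y hy] at hxy
    have := e.injective (Subtype.coe_injective hxy)
    exact congrArg Subtype.val this
  have hadj : ∀ x ∈ s, ∀ y ∈ s, (Γ.Adj x y ↔ Γ.Adj (f x) (f y)) := by
    intro x hx y hy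
    exact iff_of_false (hs x hx y hy) (ht _ (hft x hx) _ (hft y hy))
  obtain ⟨g, hg⟩ := hom s f hinj hadj
  have hmem : ∀ x ∈ s, g x ∈ t := fun x hx => by rw [hg x hx]; exact hft x hx
  refine ⟨g, hmem, ?_⟩
  have himg : s.image (fun x => g x) = t := by
    apply Finset.eq_of_subset_of_card_le
    · intro y hy
      obtain ⟨x, hx, rfl⟩ := Finset.mem_image.mp hy
      exact hmem x hx
    · rw [Finset.card_image_of_injective s g.injective, hcard]
  intro y hy
  rw [← himg] at hy
  exact Finset.mem_image.mp hy

lemma autImage_eq (g : Γ ≃g Γ) {S T : Set V} (h : ∀ x, x ∈ S ↔ g x ∈ T) :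
    (fun x => g x) '' S = T := by
  ext y
  constructor
  · rintro ⟨x, hx, rfl⟩; exact (h x).1 hx
  · intro hy
    exact ⟨g.symm y, (h _).2 (by simpa using hy), by simp⟩


/-! ### The Henson case -/

section Henson

set_option linter.unusedSectionVars false

variable [Infinite V]

lemma D2 (hom : Γ.IsHomogeneous) (htf : Γ.CliqueFree 3)
    (hP3 : ∃ z x y : V, Γ.Adj z x ∧ Γ.Adj z y ∧ x ≠ y)
    {a b : V} (hne : a ≠ b) (hnadj : ¬Γ.Adj a b) : ∃ z, Γ.Adj z a ∧ Γ.Adj z b := by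
  obtain ⟨z, x, y, hzx, hzy, hxy⟩ := hP3
  have hxyn : ¬Γ.Adj x y := fun h => tf3 htf hzx hzy h
  obtain ⟨g, hga, hgb⟩ := exists_auto_pair hom hxy hne (iff_of_false hxyn hnadj)
  exact ⟨g z, hga ▸ g.map_rel_iff.mpr hzx, hgb ▸ g.map_rel_iff.mpr hzy⟩

lemma degInf (hom : Γ.IsHomogeneous) (htf : Γ.CliqueFree 3)
    (hP3 : ∃ z x y : V, Γ.Adj z x ∧ Γ.Adj z y ∧ x ≠ y) (v : V) :
    (Γ.neighborSet v).Infinite := by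
  have key : ∃ w : V, (Γ.neighborSet w).Infinite := by
    by_contra hfin
    push_neg at hfin
    obtain ⟨v0⟩ : Nonempty V := inferInstance
    have cover : (Set.univ : Set V) ⊆
        ({v0} ∪ Γ.neighborSet v0) ∪ ⋃ y ∈ Γ.neighborSet v0, Γ.neighborSet y := by
      intro x _
      by_cases hx0 : x = v0
      · exact Or.inl (Or.inl (by simp [hx0]))
      by_cases hadj : Γ.Adj v0 x
      · exact Or.inl (Or.inr hadj)
      · obtain ⟨z, hzx, hzv⟩ := D2 hom htf hP3 hx0 (fun h => hadj h.symm)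
        exact Or.inr (Set.mem_biUnion (hzv.symm : Γ.Adj v0 z) (hzx : Γ.Adj z x))
    have : (Set.univ : Set V).Finite :=
      Set.Finite.subset (((Set.finite_singleton v0).union (hfin v0)).union
        ((hfin v0).biUnion (fun y _ => hfin y))) cover
    exact Set.infinite_univ this
  obtain ⟨w, hw⟩ := key
  obtain ⟨g, hg⟩ := exists_auto_single hom w v
  have hsub : (fun x => g x) '' Γ.neighborSet w ⊆ Γ.neighborSet v := by
    rintro _ ⟨x, hx, rfl⟩
    exact hg ▸ g.map_rel_iff.mpr hx
  exact Set.Infinite.mono hsub (Set.Infinite.image g.injective.injOn hw)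

lemma SI1 (hom : Γ.IsHomogeneous) (htf : Γ.CliqueFree 3)
    (hP3 : ∃ z x y : V, Γ.Adj z x ∧ Γ.Adj z y ∧ x ≠ y)
    (hED : ∃ a b d : V, Γ.Adj a b ∧ ¬Γ.Adj a d ∧ ¬Γ.Adj b d ∧ a ≠ d ∧ b ≠ d)
    {a b : V} (hne : a ≠ b) (hnadj : ¬Γ.Adj a b) :
    {t : V | Γ.Adj a t ∧ ¬Γ.Adj b t ∧ t ≠ b}.Infinite := by
  by_contra hfin
  rw [Set.not_infinite] at hfin
  have htrans : ∀ c e : V, c ≠ e → ¬Γ.Adj c e →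
      {t : V | Γ.Adj c t ∧ ¬Γ.Adj e t ∧ t ≠ e}.Finite := by
    intro c e hce hnce
    obtain ⟨g, hga, hgb⟩ := exists_auto_pair hom hne hce (iff_of_false hnadj hnce)
    have himg : (fun x => g x) '' {t : V | Γ.Adj a t ∧ ¬Γ.Adj b t ∧ t ≠ b} =
        {t : V | Γ.Adj c t ∧ ¬Γ.Adj e t ∧ t ≠ e} := by
      apply autImage_eq
      intro t
      simp only [Set.mem_setOf_eq]
      rw [← hga, ← hgb]
      constructor
      · rintro ⟨h1, h2, h3⟩
        exact ⟨g.map_rel_iff.mpr h1, fun hh => h2 (g.map_rel_iff.mp hh),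
          fun hh => h3 (g.injective hh)⟩
      · rintro ⟨h1, h2, h3⟩
        exact ⟨g.map_rel_iff.mp h1, fun hh => h2 (g.map_rel_iff.mpr hh),
          fun hh => h3 (congrArg g hh)⟩
    rw [← himg]
    exact hfin.image _
  obtain ⟨e1, e2, d, he, h1d, h2d, hne1, hne2⟩ := hED
  have hsub : Γ.neighborSet d ⊆
      {t : V | Γ.Adj d t ∧ ¬Γ.Adj e1 t ∧ t ≠ e1} ∪
      {t : V | Γ.Adj d t ∧ ¬Γ.Adj e2 t ∧ t ≠ e2} := by
    intro x hx
    rw [SimpleGraph.mem_neighborSet] at hx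
    by_cases h1 : Γ.Adj e1 x
    · exact Or.inr ⟨hx, fun h2 => tf3 htf he h1 h2, fun hh => h2d ((hh ▸ hx).symm)⟩
    · exact Or.inl ⟨hx, h1, fun hh => h1d ((hh ▸ hx).symm)⟩
  exact (degInf hom htf hP3 d) (Set.Finite.subset
    ((htrans d e1 hne1.symm (fun h => h1d h.symm)).union
      (htrans d e2 hne2.symm (fun h => h2d h.symm))) hsub)

lemma Rne (hom : Γ.IsHomogeneous)
    (hED : ∃ a b d : V, Γ.Adj a b ∧ ¬Γ.Adj a d ∧ ¬Γ.Adj b d ∧ a ≠ d ∧ b ≠ d)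
    {x y : V} (hxy : Γ.Adj x y) :
    ∃ z, ¬Γ.Adj x z ∧ ¬Γ.Adj y z ∧ z ≠ x ∧ z ≠ y := by
  obtain ⟨e1, e2, d, he, h1d, h2d, hne1, hne2⟩ := hED
  obtain ⟨g, hg1, hg2⟩ := exists_auto_pair hom (Γ.ne_of_adj he) (Γ.ne_of_adj hxy)
    (iff_of_true he hxy)
  refine ⟨g d, ?_, ?_, ?_, ?_⟩
  · rw [← hg1]; exact fun h => h1d (g.map_rel_iff.mp h)
  · rw [← hg2]; exact fun h => h2d (g.map_rel_iff.mp h)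
  · rw [← hg1]; exact fun h => hne1 (g.injective h).symm
  · rw [← hg2]; exact fun h => hne2 (g.injective h).symm

lemma Rinf (hom : Γ.IsHomogeneous) (htf : Γ.CliqueFree 3)
    (hP3 : ∃ z x y : V, Γ.Adj z x ∧ Γ.Adj z y ∧ x ≠ y)
    (hED : ∃ a b d : V, Γ.Adj a b ∧ ¬Γ.Adj a d ∧ ¬Γ.Adj b d ∧ a ≠ d ∧ b ≠ d)
    {x y : V} (hxy : Γ.Adj x y) :
    {z : V | ¬Γ.Adj x z ∧ ¬Γ.Adj y z ∧ z ≠ x ∧ z ≠ y}.Infinite := by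
  by_contra hfin
  rw [Set.not_infinite] at hfin
  have htrans : ∀ c e : V, Γ.Adj c e →
      {z : V | ¬Γ.Adj c z ∧ ¬Γ.Adj e z ∧ z ≠ c ∧ z ≠ e}.Finite := by
    intro c e hce
    obtain ⟨g, hga, hgb⟩ := exists_auto_pair hom (Γ.ne_of_adj hxy) (Γ.ne_of_adj hce)
      (iff_of_true hxy hce)
    have himg : (fun w => g w) '' {z : V | ¬Γ.Adj x z ∧ ¬Γ.Adj y z ∧ z ≠ x ∧ z ≠ y} =
        {z : V | ¬Γ.Adj c z ∧ ¬Γ.Adj e z ∧ z ≠ c ∧ z ≠ e} := by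
      apply autImage_eq
      intro t
      simp only [Set.mem_setOf_eq]
      rw [← hga, ← hgb]
      constructor
      · rintro ⟨h1, h2, h3, h4⟩
        exact ⟨fun hh => h1 (g.map_rel_iff.mp hh), fun hh => h2 (g.map_rel_iff.mp hh),
          fun hh => h3 (g.injective hh), fun hh => h4 (g.injective hh)⟩
      · rintro ⟨h1, h2, h3, h4⟩
        exact ⟨fun hh => h1 (g.map_rel_iff.mpr hh), fun hh => h2 (g.map_rel_iff.mpr hh),
          fun hh => h3 (congrArg g hh), fun hh => h4 (congrArg g hh)⟩
    rw [← himg]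
    exact hfin.image _
  obtain ⟨d, hdx, hdy, hdnx, hdny⟩ := Rne hom hED hxy
  have hdx' : ¬Γ.Adj d x := fun h => hdx h.symm
  have hdy' : ¬Γ.Adj d y := fun h => hdy h.symm
  have hT1 : {t : V | Γ.Adj d t ∧ Γ.Adj y t ∧ ¬Γ.Adj x t}.Infinite := by
    have hbig := (SI1 hom htf hP3 hED hdnx hdx').diff
      (hfin.union (Set.finite_singleton y))
    refine Set.Infinite.mono ?_ hbig
    rintro t ⟨⟨h1, h2, h3⟩, h4⟩
    have h4a : t ∉ {z : V | ¬Γ.Adj x z ∧ ¬Γ.Adj y z ∧ z ≠ x ∧ z ≠ y} :=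
      fun hh => h4 (Or.inl hh)
    have h4b : t ≠ y := fun hh => h4 (Or.inr hh)
    refine ⟨h1, ?_, h2⟩
    by_contra hyt
    exact h4a ⟨h2, hyt, h3, h4b⟩
  have hT2 : {t : V | Γ.Adj d t ∧ Γ.Adj x t ∧ ¬Γ.Adj y t}.Infinite := by
    have hbig := (SI1 hom htf hP3 hED hdny hdy').diff
      (hfin.union (Set.finite_singleton x))
    refine Set.Infinite.mono ?_ hbig
    rintro t ⟨⟨h1, h2, h3⟩, h4⟩
    have h4a : t ∉ {z : V | ¬Γ.Adj x z ∧ ¬Γ.Adj y z ∧ z ≠ x ∧ z ≠ y} :=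
      fun hh => h4 (Or.inl hh)
    have h4b : t ≠ x := fun hh => h4 (Or.inr hh)
    refine ⟨h1, ?_, h2⟩
    by_contra hxt
    exact h4a ⟨hxt, h2, h4b, h3⟩
  obtain ⟨s0, hs0d, hs0x, hs0y⟩ := hT2.nonempty
  have hsub : {t : V | Γ.Adj d t ∧ Γ.Adj y t ∧ ¬Γ.Adj x t} ⊆
      {z : V | ¬Γ.Adj x z ∧ ¬Γ.Adj s0 z ∧ z ≠ x ∧ z ≠ s0} := by
    rintro t ⟨h1, h2, h3⟩
    refine ⟨h3, fun hh => tf3 htf hs0d h1 hh, fun hh => hdx' (hh ▸ h1), fun hh => hs0y (hh ▸ h2)⟩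
  exact (htrans x s0 hs0x) |> (Set.Infinite.mono hsub hT1)

lemma indep_step (htf : Γ.CliqueFree 3) {T : Set V} (hT : T.Infinite) :
    ∃ v ∈ T, (T \ (Γ.neighborSet v ∪ {v})).Infinite := by
  by_contra hc
  push_neg at hc
  obtain ⟨v, hv⟩ := hT.nonempty
  have h1 : (T ∩ Γ.neighborSet v).Infinite := by
    by_contra h1
    rw [Set.not_infinite] at h1
    apply hT
    refine Set.Finite.subset (h1.union ((hc v hv).union (Set.finite_singleton v))) ?_
    intro x hx
    by_cases hxv : x = v
    · exact Or.inr (Or.inr hxv)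
    by_cases hadj : Γ.Adj v x
    · exact Or.inl ⟨hx, hadj⟩
    · exact Or.inr (Or.inl ⟨hx, fun hmem => hmem.elim hadj hxv⟩)
  obtain ⟨w, hwT, hwv⟩ := h1.nonempty
  apply h1
  refine Set.Finite.subset ((hc w hwT).union (Set.finite_singleton w)) ?_
  rintro x ⟨hxT, hxv⟩
  by_cases hxw : x = w
  · exact Or.inr hxw
  · exact Or.inl ⟨hxT, fun hmem => hmem.elim
      (fun hadjwx => tf3 htf (hwv : Γ.Adj v w) (hxv : Γ.Adj v x) hadjwx) hxw⟩

lemma bigIndep (htf : Γ.CliqueFree 3) {S : Set V} (hS : S.Infinite) (n : ℕ) :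
    ∃ F : Finset V, ↑F ⊆ S ∧ F.card = n ∧ Ind Γ F := by
  suffices h : ∃ F : Finset V, ↑F ⊆ S ∧ F.card = n ∧ Ind Γ F ∧
      ({x : V | x ∈ S ∧ x ∉ F ∧ ∀ f ∈ F, ¬Γ.Adj f x}).Infinite by
    obtain ⟨F, h1, h2, h3, _⟩ := h
    exact ⟨F, h1, h2, h3⟩
  classical
  induction n with
  | zero =>
    refine ⟨∅, by simp, by simp, by simp [Ind], ?_⟩
    refine Set.Infinite.mono ?_ hS
    intro x hx
    exact ⟨hx, Finset.notMem_empty x, fun f hf => absurd hf (Finset.notMem_empty f)⟩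
  | succ n ih =>
    obtain ⟨F, h1, h2, h3, h4⟩ := ih
    obtain ⟨v, hvT, hvT'⟩ := indep_step htf h4
    obtain ⟨hvS, hvF, hvadj⟩ := hvT
    refine ⟨insert v F, ?_, ?_, ?_, ?_⟩
    · rw [Finset.coe_insert]
      exact Set.insert_subset hvS h1
    · rw [Finset.card_insert_of_notMem hvF, h2]
    · exact ind_insert h3 (fun x hx h => hvadj x hx h.symm)
    · refine Set.Infinite.mono ?_ hvT'
      rintro x ⟨⟨hxS, hxF, hxadj⟩, hxnot⟩
      refine ⟨hxS, ?_, ?_⟩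
      · intro hmem
        rcases Finset.mem_insert.mp hmem with rfl | hmem
        · exact hxnot (Or.inr rfl)
        · exact hxF hmem
      · intro f hf
        rcases Finset.mem_insert.mp hf with rfl | hf
        · exact fun h => hxnot (Or.inl h)
        · exact hxadj f hf

lemma exists_finsubset {S : Set V} (hS : S.Infinite) (n : ℕ) :
    ∃ F : Finset V, ↑F ⊆ S ∧ F.card = n := by
  classical
  obtain ⟨t, hts, htfin, hcard⟩ := hS.exists_subset_ncard_eq n
  refine ⟨htfin.toFinset, by simpa using hts, ?_⟩
  rw [← Set.ncard_coe_finset]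
  simpa using hcard

lemma ind_of_subset_nbr (htf : Γ.CliqueFree 3) {v : V} {F : Finset V}
    (hF : ↑F ⊆ Γ.neighborSet v) : Ind Γ F :=
  fun x hx y hy hadj =>
    tf3 htf (hF (Finset.mem_coe.mpr hx) : Γ.Adj v x) (hF (Finset.mem_coe.mpr hy) : Γ.Adj v y) hadj

/-- The set of common neighbours of a finite set. -/
def CN (Γ : SimpleGraph V) (s : Finset V) : Set V := {z | ∀ x ∈ s, Γ.Adj z x}

lemma CN_anti {s t : Finset V} (h : s ⊆ t) : CN Γ t ⊆ CN Γ s := fun z hz x hx => hz x (h hx)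

lemma CNne (hom : Γ.IsHomogeneous) (htf : Γ.CliqueFree 3)
    (hP3 : ∃ z x y : V, Γ.Adj z x ∧ Γ.Adj z y ∧ x ≠ y)
    {s : Finset V} (hs : Ind Γ s) : ∃ z, ∀ x ∈ s, Γ.Adj z x := by
  obtain ⟨v⟩ : Nonempty V := inferInstance
  obtain ⟨F, hFsub, hFcard⟩ := exists_finsubset (degInf hom htf hP3 v) s.card
  obtain ⟨g, hgmem, hgsurj⟩ := exists_auto_indepMap hom (ind_of_subset_nbr htf hFsub) hs hFcard
  refine ⟨g v, ?_⟩
  intro x hx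
  obtain ⟨w, hw, rfl⟩ := hgsurj x hx
  exact g.map_rel_iff.mpr (hFsub (Finset.mem_coe.mpr hw) : Γ.Adj v w)

lemma CN_map (hom : Γ.IsHomogeneous) {s t : Finset V} (hs : Ind Γ s) (ht : Ind Γ t)
    (hcard : s.card = t.card) :
    ∃ g : Γ ≃g Γ, (fun x => g x) '' CN Γ s = CN Γ t := by
  obtain ⟨g, hgmem, hgsurj⟩ := exists_auto_indepMap hom hs ht hcard
  refine ⟨g, autImage_eq g ?_⟩
  intro z
  constructor
  · intro hz y hy
    obtain ⟨x, hx, rfl⟩ := hgsurj y hy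
    exact g.map_rel_iff.mpr (hz x hx)
  · intro hz x hx
    exact g.map_rel_iff.mp (hz (g x) (hgmem x hx))

lemma nat_descent (f : ℕ → ℕ) (hf : ∀ n, f (n + 1) ≤ f n) : ∃ n, f (n + 1) = f n := by
  by_contra hc
  push_neg at hc
  have hlt : ∀ n, f (n + 1) < f n := fun n => lt_of_le_of_ne (hf n) (hc n)
  have key : ∀ n, f n + n ≤ f 0 := by
    intro n
    induction n with
    | zero => simp
    | succ n ihn =>
      have := hlt n
      omega
  have := key (f 0 + 1)
  omega

lemma CNinf (hom : Γ.IsHomogeneous) (htf : Γ.CliqueFree 3)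
    (hP3 : ∃ z x y : V, Γ.Adj z x ∧ Γ.Adj z y ∧ x ≠ y)
    (hED : ∃ a b d : V, Γ.Adj a b ∧ ¬Γ.Adj a d ∧ ¬Γ.Adj b d ∧ a ≠ d ∧ b ≠ d)
    {s : Finset V} (hs : Ind Γ s) : (CN Γ s).Infinite := by
  by_contra hfin
  rw [Set.not_infinite] at hfin
  have hfin1 : ∀ t : Finset V, Ind Γ t → t.card = s.card → (CN Γ t).Finite := by
    intro t ht hc
    obtain ⟨g, hg⟩ := CN_map hom hs ht hc.symm
    rw [← hg]
    exact hfin.image _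
  have hfinAll : ∀ t : Finset V, Ind Γ t → s.card ≤ t.card → (CN Γ t).Finite := by
    intro t ht hc
    obtain ⟨t0, ht0sub, ht0card⟩ := Finset.exists_subset_card_eq hc
    exact Set.Finite.subset (hfin1 t0 (fun x hx y hy => ht x (ht0sub hx) y (ht0sub hy)) ht0card)
      (CN_anti ht0sub)
  have hcardeq : ∀ t u : Finset V, Ind Γ t → Ind Γ u → t.card = u.card →
      (CN Γ t).ncard = (CN Γ u).ncard := by
    intro t u ht hu hc
    obtain ⟨g, hg⟩ := CN_map hom ht hu hc
    rw [← hg, Set.ncard_image_of_injective _ g.injective]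
  obtain ⟨v0⟩ : Nonempty V := inferInstance
  have hχ : ∀ n : ℕ, ∃ F : Finset V, ↑F ⊆ Γ.neighborSet v0 ∧ F.card = s.card + n :=
    fun n => exists_finsubset (degInf hom htf hP3 v0) (s.card + n)
  choose χ hχsub hχcard using hχ
  have hχind : ∀ n, Ind Γ (χ n) := fun n => ind_of_subset_nbr htf (hχsub n)
  have hχfin : ∀ n, (CN Γ (χ n)).Finite := fun n =>
    hfinAll (χ n) (hχind n) (by rw [hχcard n]; omega)
  set f : ℕ → ℕ := fun n => (CN Γ (χ n)).ncard with hfdef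
  have hmono : ∀ n, f (n + 1) ≤ f n := by
    intro n
    obtain ⟨t0, ht0sub, ht0card⟩ := Finset.exists_subset_card_eq (s := χ (n + 1)) (n := s.card + n)
      (by rw [hχcard (n + 1)]; omega)
    have ht0ind : Ind Γ t0 := fun x hx y hy => hχind (n + 1) x (ht0sub hx) y (ht0sub hy)
    have ht0fin : (CN Γ t0).Finite := hfinAll t0 ht0ind (by rw [ht0card]; omega)
    have h1 : (CN Γ (χ (n + 1))).ncard ≤ (CN Γ t0).ncard :=
      Set.ncard_le_ncard (CN_anti ht0sub) ht0fin
    have h2 : (CN Γ t0).ncard = f n :=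
      hcardeq t0 (χ n) ht0ind (hχind n) (by rw [ht0card, hχcard n])
    calc f (n + 1) ≤ (CN Γ t0).ncard := h1
      _ = f n := h2
  obtain ⟨n, hn⟩ := nat_descent f hmono
  obtain ⟨z0, hz0⟩ := CNne hom htf hP3 (hχind n)
  have hK1 : 1 ≤ f n := by
    have hne : (CN Γ (χ n)).Nonempty := ⟨z0, hz0⟩
    have h0 := (Set.ncard_pos (hχfin n)).mpr hne
    exact h0
  obtain ⟨zz, xx, yy, hzx, hzy, hxyne⟩ := id hP3
  have hxyn : ¬Γ.Adj xx yy := fun h => tf3 htf hzx hzy h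
  obtain ⟨F, hFsub, hFcard⟩ := exists_finsubset (SI1 hom htf hP3 hED hxyne hxyn) (s.card + n)
  have hFnbr : ↑F ⊆ Γ.neighborSet xx := fun x hx => (hFsub hx).1
  have hFind : Ind Γ F := ind_of_subset_nbr htf hFnbr
  have hyyF : yy ∉ F := fun h => (hFsub (Finset.mem_coe.mpr h)).2.2 rfl
  classical
  have hF1card : (insert yy F).card = s.card + n + 1 := by
    rw [Finset.card_insert_of_notMem hyyF, hFcard]
  have hF1ind : Ind Γ (insert yy F) :=
    ind_insert hFind (fun x hx => (hFsub (Finset.mem_coe.mpr hx)).2.1)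
  have hvCN : xx ∈ CN Γ F := fun x hx => (hFsub (Finset.mem_coe.mpr hx)).1
  have hsub1 : CN Γ (insert yy F) ⊆ CN Γ F \ {xx} := by
    intro z hz
    refine ⟨fun x hx => hz x (Finset.mem_insert_of_mem hx), ?_⟩
    intro hzx0
    rw [Set.mem_singleton_iff] at hzx0
    subst hzx0
    exact hxyn (hz yy (Finset.mem_insert_self yy F))
  have hCNFfin : (CN Γ F).Finite := hfinAll F hFind (by rw [hFcard]; omega)
  have e1 : (CN Γ F).ncard = f n := hcardeq F (χ n) hFind (hχind n) (by rw [hFcard, hχcard n])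
  have e2 : (CN Γ (insert yy F)).ncard = f (n + 1) :=
    hcardeq (insert yy F) (χ (n + 1)) hF1ind (hχind (n + 1)) (by rw [hF1card, hχcard (n + 1)]; omega)
  have h3 : (CN Γ (insert yy F)).ncard ≤ (CN Γ F \ {xx}).ncard :=
    Set.ncard_le_ncard hsub1 hCNFfin.diff
  have h4 : (CN Γ F \ {xx}).ncard = (CN Γ F).ncard - 1 :=
    Set.ncard_diff_singleton_of_mem hvCN
  rw [e2, h4, e1] at h3
  omega

lemma EDj (hom : Γ.IsHomogeneous) (htf : Γ.CliqueFree 3)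
    (hP3 : ∃ z x y : V, Γ.Adj z x ∧ Γ.Adj z y ∧ x ≠ y)
    (hED : ∃ a b d : V, Γ.Adj a b ∧ ¬Γ.Adj a d ∧ ¬Γ.Adj b d ∧ a ≠ d ∧ b ≠ d)
    {s : Finset V} (hs : Ind Γ s) :
    ∃ p q : V, Γ.Adj p q ∧ (∀ w ∈ s, ¬Γ.Adj p w) ∧ (∀ w ∈ s, ¬Γ.Adj q w) ∧ p ∉ s ∧ q ∉ s := by
  obtain ⟨z1, x1, y1, hzx, _, _⟩ := id hP3
  obtain ⟨F, hFsub, hFcard, hFind⟩ := bigIndep htf (Rinf hom htf hP3 hED hzx) s.card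
  obtain ⟨g, hgmem, hgsurj⟩ := exists_auto_indepMap hom hFind hs hFcard
  refine ⟨g z1, g x1, g.map_rel_iff.mpr hzx, ?_, ?_, ?_, ?_⟩
  · intro w hw
    obtain ⟨x, hx, rfl⟩ := hgsurj w hw
    exact fun h => (hFsub (Finset.mem_coe.mpr hx)).1 (g.map_rel_iff.mp h)
  · intro w hw
    obtain ⟨x, hx, rfl⟩ := hgsurj w hw
    exact fun h => (hFsub (Finset.mem_coe.mpr hx)).2.1 (g.map_rel_iff.mp h)
  · intro h
    obtain ⟨x, hx, he⟩ := hgsurj _ h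
    exact (hFsub (Finset.mem_coe.mpr hx)).2.2.1 (g.injective he)
  · intro h
    obtain ⟨x, hx, he⟩ := hgsurj _ h
    exact (hFsub (Finset.mem_coe.mpr hx)).2.2.2 (g.injective he)

lemma SIminf [DecidableEq V] (hom : Γ.IsHomogeneous) (htf : Γ.CliqueFree 3)
    (hP3 : ∃ z x y : V, Γ.Adj z x ∧ Γ.Adj z y ∧ x ≠ y)
    (hED : ∃ a b d : V, Γ.Adj a b ∧ ¬Γ.Adj a d ∧ ¬Γ.Adj b d ∧ a ≠ d ∧ b ≠ d) :
    ∀ (m : ℕ) (w : V) (s : Finset V), s.card = m → w ∉ s → Ind Γ (insert w s) →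
    {t : V | Γ.Adj w t ∧ ∀ x ∈ s, ¬Γ.Adj x t}.Infinite := by
  classical
  intro m
  induction m with
  | zero =>
    intro w s hcard _ _
    rw [Finset.card_eq_zero] at hcard
    subst hcard
    refine Set.Infinite.mono ?_ (degInf hom htf hP3 w)
    intro t ht
    exact ⟨ht, fun x hx => absurd hx (Finset.notMem_empty x)⟩
  | succ m ih =>
    intro w s hcard hws hind
    obtain ⟨u, hu⟩ := Finset.card_pos.mp (by omega : 0 < s.card)
    have hs0card : (s.erase u).card = m := by rw [Finset.card_erase_of_mem hu, hcard]; omega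
    have hsub0 : insert w (s.erase u) ⊆ insert w s :=
      Finset.insert_subset_insert _ (Finset.erase_subset u s)
    have hus0 : u ∉ s.erase u := Finset.notMem_erase u s
    have hws0 : w ∉ s.erase u := fun h => hws (Finset.mem_of_mem_erase h)
    have hwu : w ≠ u := fun h => hws (h ▸ hu)
    have hT0 : {t : V | Γ.Adj w t ∧ ∀ x ∈ s.erase u, ¬Γ.Adj x t}.Infinite :=
      ih w (s.erase u) hs0card hws0 (fun x hx y hy => hind x (hsub0 hx) y (hsub0 hy))
    by_contra hfin
    rw [Set.not_infinite] at hfin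
    have huse : u ∉ insert w (s.erase u) := by
      intro h
      rcases Finset.mem_insert.mp h with h | h
      · exact hwu h.symm
      · exact hus0 h
    have huadj : ∀ x ∈ insert w (s.erase u), ¬Γ.Adj u x := fun x hx =>
      hind u (Finset.mem_insert_of_mem hu) x (hsub0 hx)
    have hBfin : ∀ p, p ∉ insert w (s.erase u) → (∀ x ∈ insert w (s.erase u), ¬Γ.Adj p x) →
        {t : V | (Γ.Adj w t ∧ ∀ x ∈ s.erase u, ¬Γ.Adj x t) ∧ ¬Γ.Adj p t}.Finite := by
      intro p hpns hpadj
      obtain ⟨g, hgu, hgfix⟩ := exists_auto_moveOne hom (insert w (s.erase u)) huse hpns huadj hpadj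
      have hgw : g w = w := hgfix w (Finset.mem_insert_self w _)
      have himg : (fun x => g x) '' {t : V | Γ.Adj w t ∧ ∀ x ∈ s, ¬Γ.Adj x t} =
          {t : V | (Γ.Adj w t ∧ ∀ x ∈ s.erase u, ¬Γ.Adj x t) ∧ ¬Γ.Adj p t} := by
        apply autImage_eq
        intro t
        simp only [Set.mem_setOf_eq]
        have hsdecomp : ∀ (P : V → Prop), (∀ x ∈ s, P x) ↔ (∀ x ∈ s.erase u, P x) ∧ P u := by
          intro P
          constructor
          · exact fun h => ⟨fun x hx => h x (Finset.mem_of_mem_erase hx), h u hu⟩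
          · rintro ⟨ha, hb⟩ x hx
            rcases eq_or_ne x u with h | h
            · subst h; exact hb
            · exact ha x (Finset.mem_erase.mpr ⟨h, hx⟩)
        rw [hsdecomp]
        constructor
        · rintro ⟨h1, h2, h3⟩
          refine ⟨⟨?_, ?_⟩, ?_⟩
          · rw [← hgw]; exact g.map_rel_iff.mpr h1
          · intro x hx
            rw [← hgfix x (Finset.mem_insert_of_mem hx)]
            exact fun h => h2 x hx (g.map_rel_iff.mp h)
          · rw [← hgu]; exact fun h => h3 (g.map_rel_iff.mp h)
        · rintro ⟨⟨h1, h2⟩, h3⟩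
          refine ⟨?_, ?_, ?_⟩
          · rw [← hgw] at h1; exact g.map_rel_iff.mp h1
          · intro x hx
            have hh := h2 x hx
            rw [← hgfix x (Finset.mem_insert_of_mem hx)] at hh
            exact fun h => hh (g.map_rel_iff.mpr h)
          · rw [← hgu] at h3; exact fun h => h3 (g.map_rel_iff.mpr h)
      rw [← himg]
      exact hfin.image _
    obtain ⟨p, q, hpq, hpadj, hqadj, hpns, hqns⟩ :=
      EDj hom htf hP3 hED (s := insert w (s.erase u))
        (fun x hx y hy => hind x (hsub0 hx) y (hsub0 hy))
    have hgood := (hT0.diff ((hBfin p hpns hpadj).union (hBfin q hqns hqadj))).nonempty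
    obtain ⟨t, htT0, htB⟩ := hgood
    have hpt : Γ.Adj p t := by
      by_contra h
      exact htB (Or.inl ⟨htT0, h⟩)
    have hqt : Γ.Adj q t := by
      by_contra h
      exact htB (Or.inr ⟨htT0, h⟩)
    exact tf3 htf hpq hpt hqt

lemma mainLemma (hom : Γ.IsHomogeneous) (htf : Γ.CliqueFree 3)
    (hP3 : ∃ z x y : V, Γ.Adj z x ∧ Γ.Adj z y ∧ x ≠ y)
    (hED : ∃ a b d : V, Γ.Adj a b ∧ ¬Γ.Adj a d ∧ ¬Γ.Adj b d ∧ a ≠ d ∧ b ≠ d) :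
    ∀ (n : ℕ) (W U : Finset V), W.card = n → Disjoint U W → Ind Γ U →
    ∃ z, z ∉ U ∧ z ∉ W ∧ (∀ u ∈ U, Γ.Adj z u) ∧ (∀ w ∈ W, ¬Γ.Adj z w) := by
  classical
  intro n
  induction n with
  | zero =>
    intro W U hW _ hU
    rw [Finset.card_eq_zero] at hW
    subst hW
    obtain ⟨z, hz⟩ := CNne hom htf hP3 hU
    exact ⟨z, fun h => Γ.loopless.irrefl z (hz z h), Finset.notMem_empty z, hz,
      fun w hw => absurd hw (Finset.notMem_empty w)⟩
  | succ n ih =>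
    intro W U hW hdisj hU
    by_cases ha : ∀ w ∈ W, ∃ u ∈ U, Γ.Adj w u
    · obtain ⟨z, hzCN, hzW⟩ := ((CNinf hom htf hP3 hED hU).diff W.finite_toSet).nonempty
      refine ⟨z, fun h => Γ.loopless.irrefl z (hzCN z h), fun h => hzW (Finset.mem_coe.mpr h), hzCN, ?_⟩
      intro w hw hzw
      obtain ⟨u, hu, hwu⟩ := ha w hw
      exact tf3 htf hzw (hzCN u hu) hwu
    · push_neg at ha
      obtain ⟨w, hwW, hb⟩ := ha
      have hWe : (W.erase w).card = n := by rw [Finset.card_erase_of_mem hwW, hW]; omega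
      by_cases hU0 : U = ∅
      · subst hU0
        obtain ⟨t, htN, htW⟩ := ((degInf hom htf hP3 w).diff W.finite_toSet).nonempty
        have hwt : Γ.Adj w t := htN
        obtain ⟨t', ht'R, ht'W⟩ := ((Rinf hom htf hP3 hED hwt).diff W.finite_toSet).nonempty
        obtain ⟨h1, h2, h3, h4⟩ := ht'R
        have hind2 : Ind Γ ({t, t'} : Finset V) :=
          ind_insert (ind_singleton Γ t') (by
            intro x hx
            rw [Finset.mem_singleton] at hx
            subst hx
            exact fun h => h2 h)
        have hdisj2 : Disjoint ({t, t'} : Finset V) (W.erase w) := by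
          rw [Finset.disjoint_left]
          intro a ha1 haW
          have haW' : a ∈ W := Finset.mem_of_mem_erase haW
          rcases Finset.mem_insert.mp ha1 with h | h
          · subst h; exact htW (Finset.mem_coe.mpr haW')
          · rw [Finset.mem_singleton] at h; subst h; exact ht'W (Finset.mem_coe.mpr haW')
        obtain ⟨z, hz1, hz2, hz3, hz4⟩ := ih (W.erase w) {t, t'} hWe hdisj2 hind2
        have hzt : Γ.Adj z t := hz3 t (Finset.mem_insert_self t {t'})
        have hzt' : Γ.Adj z t' := hz3 t' (Finset.mem_insert_of_mem (Finset.mem_singleton_self t'))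
        have hzw : z ≠ w := fun h => h1 (h ▸ hzt')
        have hznadjw : ¬Γ.Adj z w := fun h => tf3 htf hzt h hwt.symm
        refine ⟨z, Finset.notMem_empty z, ?_, fun u hu => absurd hu (Finset.notMem_empty u), ?_⟩
        · intro hzW
          exact hz2 (Finset.mem_erase.mpr ⟨hzw, hzW⟩)
        · intro w' hw'
          rcases eq_or_ne w' w with h | hne
          · subst h; exact hznadjw
          · exact hz4 w' (Finset.mem_erase.mpr ⟨hne, hw'⟩)
      · obtain ⟨u0, hu0⟩ := Finset.nonempty_iff_ne_empty.mpr hU0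
        have hwU : w ∉ U := Finset.disjoint_right.mp hdisj hwW
        have hindwU : Ind Γ (insert w U) := ind_insert hU hb
        have hT := SIminf hom htf hP3 hED U.card w U rfl hwU hindwU
        obtain ⟨t, htT, htW⟩ := (hT.diff W.finite_toSet).nonempty
        obtain ⟨hwt, htadj⟩ := htT
        have htU : t ∉ U := fun h => hb t h hwt
        have hindtU : Ind Γ (insert t U) := ind_insert hU (fun x hx h => htadj x hx h.symm)
        have hdisj2 : Disjoint (insert t U) (W.erase w) := by
          rw [Finset.disjoint_left]
          intro a ha1 haW
          rcases Finset.mem_insert.mp ha1 with h | h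
          · subst h; exact htW (Finset.mem_coe.mpr (Finset.mem_of_mem_erase haW))
          · exact Finset.disjoint_left.mp hdisj h (Finset.mem_of_mem_erase haW)
        obtain ⟨z, hz1, hz2, hz3, hz4⟩ := ih (W.erase w) (insert t U) hWe hdisj2 hindtU
        have hzt : Γ.Adj z t := hz3 t (Finset.mem_insert_self t U)
        have hzw : z ≠ w := fun h => hb u0 hu0 (h ▸ hz3 u0 (Finset.mem_insert_of_mem hu0))
        have hznadjw : ¬Γ.Adj z w := fun h => tf3 htf hzt h hwt.symm
        refine ⟨z, fun h => hz1 (Finset.mem_insert_of_mem h), ?_,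
          fun u hu => hz3 u (Finset.mem_insert_of_mem hu), ?_⟩
        · intro hzW
          exact hz2 (Finset.mem_erase.mpr ⟨hzw, hzW⟩)
        · intro w' hw'
          rcases eq_or_ne w' w with h | hne
          · subst h; exact hznadjw
          · exact hz4 w' (Finset.mem_erase.mpr ⟨hne, hw'⟩)

lemma hensonCase (hom : Γ.IsHomogeneous) (htf : Γ.CliqueFree 3)
    (hP3 : ∃ z x y : V, Γ.Adj z x ∧ Γ.Adj z y ∧ x ≠ y)
    (hED : ∃ a b d : V, Γ.Adj a b ∧ ¬Γ.Adj a d ∧ ¬Γ.Adj b d ∧ a ≠ d ∧ b ≠ d) :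
    Γ.HasTriangleFreeExtensionProperty := by
  refine ⟨htf, ?_⟩
  intro U W hdisj hU
  exact mainLemma hom htf hP3 hED W.card W U rfl hdisj hU

end Henson

/-! ### The empty case -/

lemma emptyCase {V : Type} [Countable V] [Infinite V] (Γ : SimpleGraph V)
    (h1 : ¬∃ a b, Γ.Adj a b) : Nonempty (Γ ≃g (⊥ : SimpleGraph ℕ)) := by
  obtain ⟨d⟩ := nonempty_denumerable V
  haveI := d
  refine ⟨⟨Denumerable.eqv V, ?_⟩⟩
  intro a b
  exact iff_of_false (by simp) (fun h => h1 ⟨a, b, h⟩)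

/-! ### The matching case -/

lemma matchCase {V : Type} [Countable V] [Infinite V] (Γ : SimpleGraph V)
    (hom : Γ.IsHomogeneous) (h1 : ∃ a b, Γ.Adj a b)
    (h2 : ¬∃ z x y, Γ.Adj z x ∧ Γ.Adj z y ∧ x ≠ y) :
    Nonempty (Γ ≃g unionOfCompletes ℕ (Fin 2)) := by
  classical
  have hdeg : ∀ v : V, ∃ y, Γ.Adj v y := by
    obtain ⟨a, b, hab⟩ := h1
    intro v
    obtain ⟨g, hg⟩ := exists_auto_single hom a v
    exact ⟨g b, hg ▸ g.map_rel_iff.mpr hab⟩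
  have huniq : ∀ v y y', Γ.Adj v y → Γ.Adj v y' → y = y' := by
    intro v y y' hy hy'
    by_contra hne
    exact h2 ⟨v, y, y', hy, hy', hne⟩
  choose mate hmate using hdeg
  have hmm : ∀ v, mate (mate v) = v := fun v =>
    huniq (mate v) (mate (mate v)) v (hmate (mate v)) (hmate v).symm
  have hmne : ∀ v, mate v ≠ v := by
    intro v h
    have hv := hmate v
    rw [h] at hv
    exact Γ.loopless.irrefl v hv
  have hsymm : ∀ {x y : V}, (x = y ∨ y = mate x) → (y = x ∨ x = mate y) := by
    rintro x y (rfl | rfl)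
    · exact Or.inl rfl
    · exact Or.inr (hmm x).symm
  have htrans : ∀ {x y z : V}, (x = y ∨ y = mate x) → (y = z ∨ z = mate y) →
      (x = z ∨ z = mate x) := by
    rintro x y z (rfl | rfl) h
    · exact h
    · rcases h with rfl | rfl
      · exact Or.inr rfl
      · exact Or.inl (hmm x).symm
  set S : Setoid V := ⟨fun x y => x = y ∨ y = mate x,
    ⟨fun x => Or.inl rfl, hsymm, htrans⟩⟩ with hS
  have hout : ∀ x : V, (Quotient.mk S x).out = x ∨ x = mate (Quotient.mk S x).out :=
    fun x => Quotient.exact (Quotient.out_eq (Quotient.mk S x))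
  set toF : V → Quotient S × Fin 2 := fun x =>
    (Quotient.mk S x, if x = (Quotient.mk S x).out then 0 else 1) with htoF
  set invF : Quotient S × Fin 2 → V := fun p =>
    if p.2 = 0 then p.1.out else mate p.1.out with hinvF
  have hleft : ∀ x, invF (toF x) = x := by
    intro x
    by_cases hx : x = (Quotient.mk S x).out
    · have ht1 : toF x = (Quotient.mk S x, 0) := by rw [htoF]; simp only [if_pos hx]
      rw [ht1]
      have h0 : invF (Quotient.mk S x, (0 : Fin 2)) = (Quotient.mk S x).out := by
        rw [hinvF]
        simp
      rw [h0]
      exact hx.symm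
    · have ht1 : toF x = (Quotient.mk S x, 1) := by rw [htoF]; simp only [if_neg hx]
      rw [ht1]
      have h0 : invF (Quotient.mk S x, (1 : Fin 2)) = mate (Quotient.mk S x).out := by
        rw [hinvF]
        simp
      rw [h0]
      rcases hout x with h | h
      · exact absurd h.symm hx
      · exact h.symm
  have hright : ∀ p, toF (invF p) = p := by
    intro p
    by_cases hi : p.2 = 0
    · have h0 : invF p = p.1.out := by rw [hinvF]; simp only [if_pos hi]
      rw [h0, htoF]
      have hq : Quotient.mk S p.1.out = p.1 := Quotient.out_eq p.1
      simp only [hq, if_true]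
      exact Prod.ext rfl hi.symm
    · have hi1 : p.2 = 1 := by
        have h2 := p.2.isLt
        have h0 : p.2.val ≠ 0 := fun h => hi (Fin.ext h)
        exact Fin.ext (by omega)
      have h0 : invF p = mate p.1.out := by rw [hinvF]; simp only [if_neg hi]
      rw [h0, htoF]
      have hq : Quotient.mk S (mate p.1.out) = p.1 := by
        have hstep : Quotient.mk S (mate p.1.out) = Quotient.mk S p.1.out :=
          Quotient.sound (Or.inr (hmm p.1.out).symm)
        rw [hstep, Quotient.out_eq]
      simp only [hq]
      rw [if_neg (hmne p.1.out)]
      exact Prod.ext rfl hi1.symm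
  set e2 : V ≃ Quotient S × Fin 2 := ⟨toF, invF, hleft, hright⟩ with he2
  haveI hQinf : Infinite (Quotient S) := by
    by_contra hinf
    rw [not_infinite_iff_finite] at hinf
    haveI := hinf
    haveI : Finite V := Finite.of_equiv _ e2.symm
    exact not_finite V
  obtain ⟨dQ⟩ := nonempty_denumerable (Quotient S)
  haveI := dQ
  set e3 : Quotient S ≃ ℕ := Denumerable.eqv (Quotient S) with he3
  set E : V ≃ ℕ × Fin 2 := e2.trans (Equiv.prodCongr e3 (Equiv.refl (Fin 2))) with hE
  have hE1 : ∀ x : V, (E x).1 = e3 (Quotient.mk S x) := fun x => rfl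
  have hE2 : ∀ x : V, (E x).2 = (toF x).2 := fun x => rfl
  refine ⟨⟨E, ?_⟩⟩
  intro a b
  show ((E a).1 = (E b).1 ∧ E a ≠ E b) ↔ Γ.Adj a b
  constructor
  · rintro ⟨hq, hne⟩
    rw [hE1 a, hE1 b] at hq
    have hq' : Quotient.mk S a = Quotient.mk S b := e3.injective hq
    have hab : a ≠ b := fun h => hne (congrArg E h)
    rcases Quotient.exact hq' with h | h
    · exact absurd h hab
    · rw [h]
      exact hmate a
  · intro hadj
    have hbm : b = mate a := (huniq a (mate a) b (hmate a) hadj).symm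
    constructor
    · rw [hE1 a, hE1 b]
      exact congrArg e3 (Quotient.sound (Or.inr hbm))
    · exact fun h => Γ.ne_of_adj hadj (E.injective h)

/-! ### The complete bipartite case -/

lemma bipartiteCase {V : Type} [Countable V] [Infinite V] (Γ : SimpleGraph V)
    (hom : Γ.IsHomogeneous) (htf : Γ.CliqueFree 3)
    (hP3 : ∃ z x y : V, Γ.Adj z x ∧ Γ.Adj z y ∧ x ≠ y)
    (hnED : ¬∃ a b d : V, Γ.Adj a b ∧ ¬Γ.Adj a d ∧ ¬Γ.Adj b d ∧ a ≠ d ∧ b ≠ d) :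
    Nonempty (Γ ≃g completeBipartiteGraph ℕ ℕ) := by
  classical
  obtain ⟨a0, b0, hab0⟩ : ∃ a b, Γ.Adj a b := by
    obtain ⟨z, x, y, hzx, _, _⟩ := hP3
    exact ⟨z, x, hzx⟩
  set A : Set V := Γ.neighborSet b0 with hA
  have hcover : ∀ x : V, x ∈ A ∨ x ∈ Γ.neighborSet a0 := by
    intro x
    by_cases h1 : Γ.Adj b0 x
    · exact Or.inl h1
    by_cases h2 : Γ.Adj a0 x
    · exact Or.inr h2
    rcases eq_or_ne x a0 with h | hxa
    · subst h; exact Or.inl hab0.symm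
    rcases eq_or_ne x b0 with h | hxb
    · subst h; exact Or.inr hab0
    exact absurd ⟨a0, b0, x, hab0, h2, h1, hxa.symm, hxb.symm⟩ hnED
  have hcompl : Γ.neighborSet a0 = Aᶜ := by
    ext x
    simp only [Set.mem_compl_iff]
    constructor
    · intro hx hxA
      exact tf3 htf hab0 (hx : Γ.Adj a0 x) (hxA : Γ.Adj b0 x)
    · intro hx
      rcases hcover x with h | h
      · exact absurd h hx
      · exact h
  have hcomplete : ∀ x ∈ A, ∀ y ∈ (Aᶜ : Set V), Γ.Adj x y := by
    intro x hxA y hyC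
    have hyB : Γ.Adj a0 y := by rw [← hcompl] at hyC; exact hyC
    have hxB : Γ.Adj b0 x := hxA
    by_contra hnadj
    have hxy : x ≠ y := by
      rintro rfl
      exact hyC hxA
    obtain ⟨zc, hz1, hz2⟩ := D2 hom htf hP3 hxy hnadj
    rcases hcover zc with hz | hz
    · exact tf3 htf (hz : Γ.Adj b0 zc) hxB hz1
    · exact tf3 htf (hz : Γ.Adj a0 zc) hyB hz2
  have hAind : ∀ x ∈ A, ∀ y ∈ A, ¬Γ.Adj x y := fun x hx y hy h =>
    tf3 htf (hx : Γ.Adj b0 x) (hy : Γ.Adj b0 y) h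
  have hCind : ∀ x ∈ (Aᶜ : Set V), ∀ y ∈ (Aᶜ : Set V), ¬Γ.Adj x y := by
    intro x hx y hy h
    rw [← hcompl] at hx hy
    exact tf3 htf hx hy h
  have hAinf : A.Infinite := degInf hom htf hP3 b0
  have hCinf : (Aᶜ : Set V).Infinite := by rw [← hcompl]; exact degInf hom htf hP3 a0
  haveI := hAinf.to_subtype
  haveI := hCinf.to_subtype
  obtain ⟨dA⟩ := nonempty_denumerable ↥A
  haveI := dA
  obtain ⟨dC⟩ := nonempty_denumerable ↥(Aᶜ : Set V)
  haveI := dC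
  set eA : ↥A ≃ ℕ := Denumerable.eqv _ with heA
  set eC : ↥(Aᶜ : Set V) ≃ ℕ := Denumerable.eqv _ with heC
  haveI : DecidablePred (· ∈ A) := Classical.decPred _
  set E : V ≃ ℕ ⊕ ℕ := (Equiv.Set.sumCompl A).symm.trans (Equiv.sumCongr eA eC) with hE
  have hEl : ∀ (x : V) (hx : x ∈ A), E x = Sum.inl (eA ⟨x, hx⟩) := by
    intro x hx
    rw [hE]
    simp [Equiv.Set.sumCompl_symm_apply_of_mem hx]
  have hEr : ∀ (x : V) (hx : x ∉ A), E x = Sum.inr (eC ⟨x, hx⟩) := by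
    intro x hx
    rw [hE]
    simp [Equiv.Set.sumCompl_symm_apply_of_notMem hx]
  refine ⟨⟨E, ?_⟩⟩
  intro x y
  by_cases hx : x ∈ A <;> by_cases hy : y ∈ A
  · rw [hEl x hx, hEl y hy]
    exact iff_of_false (by simp [completeBipartiteGraph]) (hAind x hx y hy)
  · rw [hEl x hx, hEr y hy]
    exact iff_of_true (by simp [completeBipartiteGraph]) (hcomplete x hx y hy)
  · rw [hEr x hx, hEl y hy]
    exact iff_of_true (by simp [completeBipartiteGraph]) ((hcomplete y hy x hx).symm)
  · rw [hEr x hx, hEr y hy]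
    exact iff_of_false (by simp [completeBipartiteGraph]) (hCind x hx y hy)

end WoodrowProof

/-- **Woodrow's classification of countable homogeneous triangle-free graphs**:
such a graph is the countable null graph, a countable perfect matching, the complete
bipartite graph with two countably infinite parts, or Henson's graph `H₃`. -/
theorem countable_homogeneous_triangleFree_classification {V : Type} [Countable V] [Infinite V]
    (Γ : SimpleGraph V) (hΓ : Γ.IsHomogeneous) (htf : Γ.CliqueFree 3) :
    Nonempty (Γ ≃g (⊥ : SimpleGraph ℕ)) ∨
    Nonempty (Γ ≃g unionOfCompletes ℕ (Fin 2)) ∨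
    Nonempty (Γ ≃g completeBipartiteGraph ℕ ℕ) ∨
    Γ.HasTriangleFreeExtensionProperty := by
  classical
  by_cases h1 : ∃ a b, Γ.Adj a b
  · by_cases h2 : ∃ z x y, Γ.Adj z x ∧ Γ.Adj z y ∧ x ≠ y
    · by_cases hED : ∃ a b d : V, Γ.Adj a b ∧ ¬Γ.Adj a d ∧ ¬Γ.Adj b d ∧ a ≠ d ∧ b ≠ d
      · exact Or.inr (Or.inr (Or.inr (WoodrowProof.hensonCase hΓ htf h2 hED)))
      · exact Or.inr (Or.inr (Or.inl (WoodrowProof.bipartiteCase Γ hΓ htf h2 hED)))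
    · exact Or.inr (Or.inl (WoodrowProof.matchCase Γ hΓ h1 h2))
  · exact Or.inl (WoodrowProof.emptyCase Γ h1)
end
end

section
/- Every graph on a countably infinite vertex set having the extension property is homogeneous: every isomorphism between finite induced subgraphs extends to an automorphism of the whole graph. -/
/-- The extension property characterising the random graph `R`. -/
def SimpleGraph.HasExtensionProperty {V : Type*} (Γ : SimpleGraph V) : Prop :=
  ∀ U W : Finset V, Disjoint U W →
    ∃ z, z ∉ U ∧ z ∉ W ∧ (∀ u ∈ U, Γ.Adj z u) ∧ (∀ w ∈ W, ¬ Γ.Adj z w)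
/-!
Back and forth. Encode a finite partial isomorphism as a finite set of pairs. The extension
property, applied to the images of the neighbours and non-neighbours of a new vertex, finds a
partner for it, so every finite partial isomorphism can be extended to any prescribed vertex on
either side. Enumerating the vertices and extending alternately on both sides produces an
increasing chain whose union is the graph of an automorphism extending the given map.
-/

namespace SimpleGraph

variable {V W : Type*} (G : SimpleGraph V) (H : SimpleGraph W)

/-- `s` is the graph of an isomorphism between induced subgraphs of `G` and `H`. -/
def IsPartialIso (s : Set (V × W)) : Prop :=
  ∀ p ∈ s, ∀ q ∈ s, (p.1 = q.1 ↔ p.2 = q.2) ∧ (G.Adj p.1 q.1 ↔ H.Adj p.2 q.2)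

abbrev FinitePartialIso : Type _ := {s : Finset (V × W) // G.IsPartialIso H s}

variable {G H}

theorem isPartialIso_image_graph {A : Set V} {f : V → W} (hf : Set.InjOn f A)
    (hadj : ∀ x ∈ A, ∀ y ∈ A, (G.Adj x y ↔ H.Adj (f x) (f y))) :
    G.IsPartialIso H ((fun x ↦ (x, f x)) '' A) := by
  rintro _ ⟨x, hx, rfl⟩ _ ⟨y, hy, rfl⟩
  exact ⟨⟨congrArg f, fun h ↦ hf hx hy h⟩, hadj x hx y hy⟩

namespace IsPartialIso

variable {s : Set (V × W)}

theorem swap (hs : G.IsPartialIso H s) : H.IsPartialIso G (Prod.swap ⁻¹' s) :=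
  fun _ hp _ hq ↦ let h := hs _ hp _ hq; ⟨h.1.symm, h.2.symm⟩

theorem insert (hs : G.IsPartialIso H s) {a : V} {b : W}
    (hab : ∀ p ∈ s, (p.1 = a ↔ p.2 = b) ∧ (G.Adj p.1 a ↔ H.Adj p.2 b)) :
    G.IsPartialIso H (insert (a, b) s) := by
  rintro p (rfl | hp) q (rfl | hq)
  · simp
  · obtain ⟨h₁, h₂⟩ := hab q hq
    exact ⟨by rw [eq_comm, h₁, eq_comm], by rw [G.adj_comm, h₂, H.adj_comm]⟩
  · exact hab p hp
  · exact hs p hp q hq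

theorem iUnion {ι : Type*} {s : ι → Set (V × W)} (hdir : Directed (· ⊆ ·) s)
    (hs : ∀ i, G.IsPartialIso H (s i)) : G.IsPartialIso H (⋃ i, s i) := by
  intro p hp q hq
  obtain ⟨i, hpi⟩ := Set.mem_iUnion.1 hp
  obtain ⟨j, hqj⟩ := Set.mem_iUnion.1 hq
  obtain ⟨k, hik, hjk⟩ := hdir i j
  exact hs k p (hik hpi) q (hjk hqj)

theorem exists_across (hH : H.HasExtensionProperty) {s : Finset (V × W)}
    (hs : G.IsPartialIso H s) (a : V) :
    ∃ b, ∀ p ∈ s, (p.1 = a ↔ p.2 = b) ∧ (G.Adj p.1 a ↔ H.Adj p.2 b) := by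
  classical
  by_cases hdom : ∃ b, (a, b) ∈ s
  · obtain ⟨b, hb⟩ := hdom
    exact ⟨b, fun p hp ↦ hs p hp _ hb⟩
  simp only [not_exists] at hdom
  set U := {p ∈ s | G.Adj p.1 a}.image Prod.snd
  set U' := {p ∈ s | ¬G.Adj p.1 a}.image Prod.snd
  have hdisj : Disjoint U U' := by
    simp only [U, U', Finset.disjoint_left, Finset.mem_image, Finset.mem_filter]
    rintro _ ⟨p, ⟨hp, hpa⟩, rfl⟩ ⟨q, ⟨hq, hqa⟩, hqp⟩
    exact hqa ((hs q hq p hp).1.2 hqp ▸ hpa)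
  obtain ⟨b, hbU, hbU', hadj, hnadj⟩ := hH U U' hdisj
  refine ⟨b, fun p hp ↦ ?_⟩
  have hpa : p.1 ≠ a := fun h ↦ hdom p.2 (h ▸ hp)
  by_cases hpa' : G.Adj p.1 a
  · have hpU : p.2 ∈ U := Finset.mem_image_of_mem _ (Finset.mem_filter.2 ⟨hp, hpa'⟩)
    exact ⟨iff_of_false hpa (fun h ↦ hbU (h ▸ hpU)), iff_of_true hpa' (hadj _ hpU).symm⟩
  · have hpU' : p.2 ∈ U' := Finset.mem_image_of_mem _ (Finset.mem_filter.2 ⟨hp, hpa'⟩)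
    exact ⟨iff_of_false hpa (fun h ↦ hbU' (h ▸ hpU')),
      iff_of_false hpa' (fun h ↦ hnadj _ hpU' h.symm)⟩

theorem exists_across_symm (hG : G.HasExtensionProperty) {s : Finset (V × W)}
    (hs : G.IsPartialIso H s) (b : W) :
    ∃ a, ∀ p ∈ s, (p.1 = a ↔ p.2 = b) ∧ (G.Adj p.1 a ↔ H.Adj p.2 b) := by
  classical
  have hs' : H.IsPartialIso G (s.image Prod.swap : Finset (W × V)) := by
    simpa only [Finset.coe_image, Set.image_swap_eq_preimage_swap] using hs.swap
  obtain ⟨a, ha⟩ := hs'.exists_across hG b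
  refine ⟨a, fun p hp ↦ ?_⟩
  obtain ⟨h₁, h₂⟩ := ha p.swap (Finset.mem_image_of_mem _ hp)
  exact ⟨h₁.symm, h₂.symm⟩

theorem exists_iso_of_total {t : Set (V × W)} (ht : G.IsPartialIso H t)
    (hleft : ∀ a, ∃ b, (a, b) ∈ t) (hright : ∀ b, ∃ a, (a, b) ∈ t) :
    ∃ e : G ≃g H, ∀ p ∈ t, e p.1 = p.2 := by
  choose f hf using hleft
  have hft : ∀ p ∈ t, f p.1 = p.2 := fun p hp ↦ (ht _ (hf p.1) p hp).1.1 rfl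
  have hbij : Function.Bijective f := by
    refine ⟨fun a a' h ↦ (ht _ (hf a) _ (hf a')).1.2 h, fun b ↦ ?_⟩
    obtain ⟨a, ha⟩ := hright b
    exact ⟨a, hft _ ha⟩
  exact ⟨⟨Equiv.ofBijective f hbij, fun {a a'} ↦ (ht _ (hf a) _ (hf a')).2.symm⟩, hft⟩

end IsPartialIso

namespace FinitePartialIso

def definedAtLeft (hH : H.HasExtensionProperty) (a : V) :
    Order.Cofinal (G.FinitePartialIso H) where
  carrier := {s | ∃ b, (a, b) ∈ s.1}
  isCofinal s := by
    classical
    obtain ⟨b, hb⟩ := s.2.exists_across hH a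
    refine ⟨⟨insert (a, b) s.1, ?_⟩, ⟨b, Finset.mem_insert_self _ _⟩, Finset.subset_insert _ _⟩
    simpa only [Finset.coe_insert] using s.2.insert hb

def definedAtRight (hG : G.HasExtensionProperty) (b : W) :
    Order.Cofinal (G.FinitePartialIso H) where
  carrier := {s | ∃ a, (a, b) ∈ s.1}
  isCofinal s := by
    classical
    obtain ⟨a, ha⟩ := s.2.exists_across_symm hG b
    refine ⟨⟨insert (a, b) s.1, ?_⟩, ⟨a, Finset.mem_insert_self _ _⟩, Finset.subset_insert _ _⟩
    simpa only [Finset.coe_insert] using s.2.insert ha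

end FinitePartialIso

open FinitePartialIso in
theorem IsPartialIso.exists_iso_of_hasExtensionProperty [Countable V] [Countable W]
    (hG : G.HasExtensionProperty) (hH : H.HasExtensionProperty) {s : Finset (V × W)}
    (hs : G.IsPartialIso H s) : ∃ e : G ≃g H, ∀ p ∈ s, e p.1 = p.2 := by
  cases nonempty_encodable V
  cases nonempty_encodable W
  let D : V ⊕ W → Order.Cofinal (G.FinitePartialIso H) :=
    Sum.elim (definedAtLeft hH) (definedAtRight hG)
  let chain := Order.sequenceOfCofinals ⟨s, hs⟩ D
  have hmono : Monotone fun n ↦ ((chain n).1 : Set (V × W)) :=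
    fun m n hmn ↦ Finset.coe_subset.2 (Order.sequenceOfCofinals.monotone _ D hmn)
  have hunion := IsPartialIso.iUnion hmono.directed_le fun n ↦ (chain n).2
  obtain ⟨e, he⟩ := hunion.exists_iso_of_total
    (fun a ↦ (Order.sequenceOfCofinals.encode_mem _ D (.inl a)).imp
      fun _ h ↦ Set.mem_iUnion_of_mem _ h)
    (fun b ↦ (Order.sequenceOfCofinals.encode_mem _ D (.inr b)).imp
      fun _ h ↦ Set.mem_iUnion_of_mem _ h)
  exact ⟨e, fun p hp ↦ he p (Set.mem_iUnion_of_mem 0 hp)⟩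

end SimpleGraph

theorem extensionProperty_isHomogeneous_general {V : Type} [Countable V]
    (Γ : SimpleGraph V) (hΓ : Γ.HasExtensionProperty) : Γ.IsHomogeneous := by
  classical
  intro A f hf hadj
  have hgraph : Γ.IsPartialIso Γ ↑(A.image fun x ↦ (x, f x)) := by
    simpa only [Finset.coe_image] using SimpleGraph.isPartialIso_image_graph hf hadj
  obtain ⟨e, he⟩ := hgraph.exists_iso_of_hasExtensionProperty hΓ hΓ
  exact ⟨e, fun x hx ↦ he _ (Finset.mem_image_of_mem _ hx)⟩

/-- A countably infinite graph with the extension property is homogeneous. -/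
theorem extensionProperty_isHomogeneous {V : Type} [Countable V] [Infinite V]
    (Γ : SimpleGraph V) (hΓ : Γ.HasExtensionProperty) : Γ.IsHomogeneous :=
  extensionProperty_isHomogeneous_general Γ hΓ
end

section
/- Let P be the set of primes congruent to 1 modulo 4, and for p, q ∈ P declare p ~ q when p ≠ q and q is a square modulo p. Then (i) this relation is symmetric (for distinct p, q ∈ P, q is a square mod p if and only if p is a square mod q), so it defines a simple graph on P, and (ii) this graph has the extension property (hence is isomorphic to the random graph R). -/
lemma symm_aux (p q : ℕ) [Fact p.Prime] [Fact q.Prime] (hp : p % 4 = 1) (hq : q % 4 = 1)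
    (hne : p ≠ q) : IsSquare ((q : ℕ) : ZMod p) ↔ IsSquare ((p : ℕ) : ZMod q) := by
  have hq2 : q ≠ 2 := by rintro rfl; simp at hq
  rw [← legendreSym.eq_one_iff' p (ZMod.prime_ne_zero p q hne),
    ← legendreSym.eq_one_iff' q (ZMod.prime_ne_zero q p hne.symm),
    legendreSym.quadratic_reciprocity_one_mod_four hp hq2]

noncomputable def nonresidue (n : ℕ) : ℕ :=
  if h : n.Prime ∧ n ≠ 2 then
    haveI : Fact n.Prime := ⟨h.1⟩
    (FiniteField.exists_nonsquare (F := ZMod n)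
      (by rw [ZMod.ringChar_zmod_n]; exact h.2)).choose.val
  else 1

lemma nonresidue_spec (n : ℕ) [hn : Fact n.Prime] (h2 : n ≠ 2) :
    ¬ IsSquare ((nonresidue n : ℕ) : ZMod n) := by
  rw [nonresidue, dif_pos ⟨hn.out, h2⟩]
  rw [ZMod.natCast_val, ZMod.cast_id]
  exact (FiniteField.exists_nonsquare (F := ZMod n)
      (by rw [ZMod.ringChar_zmod_n]; exact h2)).choose_spec

lemma nonresidue_ne_zero (n : ℕ) [Fact n.Prime] (h2 : n ≠ 2) :
    ((nonresidue n : ℕ) : ZMod n) ≠ 0 := by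
  intro h
  exact nonresidue_spec n h2 (h ▸ IsSquare.zero)



/-- The set of primes congruent to 1 mod 4. -/
abbrev Primes1Mod4 : Type := {p : ℕ // p.Prime ∧ p % 4 = 1}

/-- The quadratic-residue graph on the primes congruent to 1 mod 4: distinct `p`, `q`
are adjacent iff `q` is a square mod `p` (equivalently, by part (i), iff `p` is a
square mod `q`). -/
def quadResGraph : SimpleGraph Primes1Mod4 :=
  SimpleGraph.fromRel (fun p q => IsSquare ((q : ℕ) : ZMod (p : ℕ)))

/-- (i) For distinct primes `p ≡ q ≡ 1 (mod 4)`, `q` is a square mod `p` iff `p` is a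
square mod `q`; (ii) the resulting graph has the extension property, hence is isomorphic
to the random graph `R`. -/
theorem quadResGraph_symm_and_extensionProperty :
    (∀ p q : Primes1Mod4, p ≠ q →
      (IsSquare ((q : ℕ) : ZMod (p : ℕ)) ↔ IsSquare ((p : ℕ) : ZMod (q : ℕ)))) ∧
    quadResGraph.HasExtensionProperty := by
  classical
  have key : ∀ p q : Primes1Mod4, p ≠ q →
      (IsSquare ((q : ℕ) : ZMod (p : ℕ)) ↔ IsSquare ((p : ℕ) : ZMod (q : ℕ))) := by
    rintro ⟨p, pp, hp4⟩ ⟨q, qp, hq4⟩ hne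
    haveI : Fact p.Prime := ⟨pp⟩
    haveI : Fact q.Prime := ⟨qp⟩
    exact symm_aux p q hp4 hq4 (fun h => hne (Subtype.ext h))
  refine ⟨key, fun U W hUW => ?_⟩
  -- set up CRT data
  set T : Finset ℕ := (U ∪ W).image (fun p : Primes1Mod4 => p.val) with hT
  set t : Finset ℕ := insert 4 T with ht
  have hTprime : ∀ i ∈ T, i.Prime := by
    intro i hi
    simp only [hT, Finset.mem_image] at hi
    obtain ⟨p, _, rfl⟩ := hi
    exact p.2.1
  have hTmod : ∀ i ∈ T, i % 4 = 1 := by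
    intro i hi
    simp only [hT, Finset.mem_image] at hi
    obtain ⟨p, _, rfl⟩ := hi
    exact p.2.2
  have hTodd : ∀ i ∈ T, ¬ (2 ∣ i) := by
    intro i hi h2
    have := hTmod i hi
    omega
  have hs : ∀ i ∈ t, id i ≠ 0 := by
    intro i hi
    simp only [ht, Finset.mem_insert] at hi
    rcases hi with rfl | hi
    · simp
    · exact (hTprime i hi).ne_zero
  have pp : Set.Pairwise (t : Set ℕ) (Function.onFun Nat.Coprime id) := by
    intro i hi j hj hij
    simp only [Function.onFun, id_eq]
    simp only [ht, Finset.coe_insert, Set.mem_insert_iff, Finset.mem_coe] at hi hj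
    have c4 : ∀ m ∈ T, Nat.Coprime 4 m := by
      intro m hm
      have : Nat.Coprime 2 m := (Nat.coprime_primes Nat.prime_two (hTprime m hm)).mpr
        (by rintro rfl; exact hTodd 2 hm ⟨1, rfl⟩)
      rw [show (4:ℕ) = 2^2 by norm_num]
      exact this.pow_left 2
    rcases hi with rfl | hi
    · rcases hj with rfl | hj
      · exact absurd rfl hij
      · exact c4 j hj
    · rcases hj with rfl | hj
      · exact (c4 i hi).symm
      · exact (Nat.coprime_primes (hTprime i hi) (hTprime j hj)).mpr hij
  -- residue targets
  set a : ℕ → ℕ := fun n => if (∃ w ∈ W, (w : ℕ) = n) then nonresidue n else 1 with ha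
  set k : ℕ := (Nat.chineseRemainderOfFinset a id t hs pp : ℕ) with hk
  have hkmod : ∀ i ∈ t, k ≡ a i [MOD i] := (Nat.chineseRemainderOfFinset a id t hs pp).2
  set q : ℕ := ∏ i ∈ t, i with hq
  have hq0 : q ≠ 0 := Finset.prod_ne_zero_iff.mpr (by intro i hi; exact hs i hi)
  haveI : NeZero q := ⟨hq0⟩
  have h4t : 4 ∈ t := Finset.mem_insert_self _ _
  have h4W : ¬ ∃ w : Primes1Mod4, w ∈ W ∧ (w : ℕ) = 4 := by
    rintro ⟨w, _, hw⟩
    have := w.2.1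
    rw [hw] at this
    norm_num at this
  have ha4 : a 4 = 1 := by
    rw [ha]
    simp only [ite_eq_right_iff]
    intro h
    exact absurd h h4W
  -- z values mod each prime
  have haU : ∀ u : Primes1Mod4, u ∈ U → a (u : ℕ) = 1 := by
    intro u hu
    rw [ha]
    simp only [ite_eq_right_iff]
    rintro ⟨w, hw, hwu⟩
    have : w = u := Subtype.ext hwu
    subst this
    exact absurd hu (Finset.disjoint_right.mp hUW hw)
  have haW : ∀ w : Primes1Mod4, w ∈ W → a (w : ℕ) = nonresidue (w : ℕ) := by
    intro w hw
    show (if ∃ w' ∈ W, (w' : ℕ) = (w : ℕ) then nonresidue (w : ℕ) else 1) = nonresidue (w : ℕ)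
    rw [if_pos ⟨w, hw, rfl⟩]
  -- coprimality of k and q
  have hcop : Nat.Coprime k q := by
    rw [hq]
    apply Nat.Coprime.prod_right
    intro i hi
    have hmod := hkmod i hi
    simp only [ht, Finset.mem_insert] at hi
    rcases hi with rfl | hi
    · -- i = 4
      rw [ha4] at hmod
      have hm1 : k % 4 = 1 % 4 := hmod
      have : k % 4 = 1 := by omega
      have h2 : ¬ (2 ∣ k) := by omega
      have h2k : Nat.Coprime k 2 :=
        (Nat.prime_two.coprime_iff_not_dvd.mpr (by omega)).symm
      rw [show (4:ℕ) = 2^2 by norm_num]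
      exact h2k.pow_right 2
    · haveI : Fact i.Prime := ⟨hTprime i hi⟩
      have hi2 : i ≠ 2 := by rintro rfl; exact hTodd 2 hi ⟨1, rfl⟩
      rw [Nat.coprime_comm]
      rw [Nat.Prime.coprime_iff_not_dvd (hTprime i hi)]
      intro hdvd
      have : (k : ZMod i) = 0 := (ZMod.natCast_eq_zero_iff k i).mpr hdvd
      rw [(ZMod.natCast_eq_natCast_iff _ _ _).mpr hmod] at this
      have this2 : ((if ∃ w ∈ W, (w : ℕ) = i then nonresidue i else 1 : ℕ) : ZMod i) = 0 := this
      rcases (em (∃ w ∈ W, ((w : ℕ) : ℕ) = i)) with h | h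
      · rw [if_pos h] at this2
        exact nonresidue_ne_zero i hi2 this2
      · rw [if_neg h] at this2
        simp at this2
  -- Dirichlet
  have hunit : IsUnit ((k : ZMod q)) := (ZMod.isUnit_iff_coprime k q).mpr hcop
  obtain ⟨z, hzq, hzp, hzmod⟩ := Nat.forall_exists_prime_gt_and_eq_mod hunit q
  have hzk : z ≡ k [MOD q] := (ZMod.natCast_eq_natCast_iff _ _ _).mp hzmod
  have hz_i : ∀ i ∈ t, z ≡ a i [MOD i] := by
    intro i hi
    exact ((hzk.of_dvd (Finset.dvd_prod_of_mem id hi)).trans (hkmod i hi))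
  have hz4 : z % 4 = 1 := by
    have h1 := hz_i 4 h4t
    rw [ha4] at h1
    have h2 : z % 4 = 1 % 4 := h1
    omega
  have hzgt : ∀ i ∈ t, i < z := by
    intro i hi
    exact lt_of_le_of_lt (Nat.le_of_dvd (Nat.pos_of_ne_zero hq0)
      (Finset.dvd_prod_of_mem id hi)) hzq
  set Z : Primes1Mod4 := ⟨z, hzp, hz4⟩ with hZ
  have hZmem : ∀ p : Primes1Mod4, p ∈ U ∪ W → (p : ℕ) < z := by
    intro p hp
    exact hzgt (p : ℕ) (Finset.mem_insert_of_mem (Finset.mem_image_of_mem _ hp))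
  have hZne : ∀ p : Primes1Mod4, p ∈ U ∪ W → Z ≠ p := by
    intro p hp h
    have := hZmem p hp
    rw [← h] at this
    exact lt_irrefl _ this
  refine ⟨Z, ?_, ?_, ?_, ?_⟩
  · intro h; exact hZne Z (Finset.mem_union_left _ h) rfl
  · intro h; exact hZne Z (Finset.mem_union_right _ h) rfl
  · intro u hu
    have hne := hZne u (Finset.mem_union_left _ hu)
    have hsq : IsSquare ((z : ℕ) : ZMod (u : ℕ)) := by
      have hmod := hz_i (u : ℕ) (Finset.mem_insert_of_mem (Finset.mem_image_of_mem _
        (Finset.mem_union_left _ hu)))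
      rw [haU u hu] at hmod
      rw [(ZMod.natCast_eq_natCast_iff _ _ _).mpr hmod]
      simp
    exact ⟨hne, Or.inr hsq⟩
  · intro w hw
    have hne := hZne w (Finset.mem_union_right _ hw)
    haveI : Fact (w : ℕ).Prime := ⟨w.2.1⟩
    have hw2 : (w : ℕ) ≠ 2 := by
      have := w.2.2; omega
    have hnsq : ¬ IsSquare ((z : ℕ) : ZMod (w : ℕ)) := by
      have hmod := hz_i (w : ℕ) (Finset.mem_insert_of_mem (Finset.mem_image_of_mem _
        (Finset.mem_union_right _ hw)))
      rw [haW w hw] at hmod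
      rw [(ZMod.natCast_eq_natCast_iff _ _ _).mpr hmod]
      exact nonresidue_spec _ hw2
    rintro ⟨-, h | h⟩
    · exact hnsq ((key Z w hne).mp h)
    · exact hnsq h
end

section
/- In the space of all graphs on the vertex set ℕ, coded as the product space of functions from unordered pairs of distinct natural numbers to Bool with the product topology, the set of codes whose associated graph has the extension property is comeager (residual). Consequently the set of countable graphs isomorphic to the random graph R is residual. -/
/-- Codes for graphs on `ℕ`: functions from unordered pairs of distinct naturals
to `Bool`. -/
abbrev GraphCode : Type := {e : Sym2 ℕ // ¬ e.IsDiag} → Bool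

/-- The graph on `ℕ` coded by `f`: distinct `x`, `y` are adjacent iff
`f {x, y} = true`. -/
def graphOfCode (f : GraphCode) : SimpleGraph ℕ :=
  SimpleGraph.fromRel (fun x y =>
    ∃ h : x ≠ y, f ⟨s(x, y), by simpa [Sym2.mk_isDiag_iff] using h⟩ = true)

lemma adj_graphOfCode (f : GraphCode) {x y : ℕ} (h : x ≠ y) :
    (graphOfCode f).Adj x y ↔ f ⟨s(x, y), by simpa [Sym2.mk_isDiag_iff] using h⟩ = true := by
  simp only [graphOfCode, SimpleGraph.fromRel_adj]
  constructor
  · rintro ⟨-, ⟨h', hf⟩ | ⟨h', hf⟩⟩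
    · exact hf
    · convert hf using 2
      exact Subtype.ext Sym2.eq_swap
  · intro hf
    exact ⟨h, Or.inl ⟨h, hf⟩⟩

/-- A finite partial isomorphism between two graphs, as a list of pairs. -/
structure IsPIso (Γ Δ : SimpleGraph ℕ) (l : List (ℕ × ℕ)) : Prop where
  inj1 : ∀ p ∈ l, ∀ q ∈ l, p.1 = q.1 → p = q
  inj2 : ∀ p ∈ l, ∀ q ∈ l, p.2 = q.2 → p = q
  adj : ∀ p ∈ l, ∀ q ∈ l, (Γ.Adj p.1 q.1 ↔ Δ.Adj p.2 q.2)

lemma IsPIso.swap {Γ Δ : SimpleGraph ℕ} {l : List (ℕ × ℕ)} (hl : IsPIso Γ Δ l) :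
    IsPIso Δ Γ (l.map Prod.swap) := by
  constructor
  · simp only [List.mem_map]
    rintro p ⟨p', hp', rfl⟩ q ⟨q', hq', rfl⟩ h
    exact congrArg Prod.swap (hl.inj2 p' hp' q' hq' h)
  · simp only [List.mem_map]
    rintro p ⟨p', hp', rfl⟩ q ⟨q', hq', rfl⟩ h
    exact congrArg Prod.swap (hl.inj1 p' hp' q' hq' h)
  · simp only [List.mem_map]
    rintro p ⟨p', hp', rfl⟩ q ⟨q', hq', rfl⟩
    exact (hl.adj p' hp' q' hq').symm

lemma IsPIso.extend_left {Γ Δ : SimpleGraph ℕ} (hΔ : Δ.HasExtensionProperty)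
    {l : List (ℕ × ℕ)} (hl : IsPIso Γ Δ l) (a : ℕ) :
    ∃ l', IsPIso Γ Δ l' ∧ l ⊆ l' ∧ ∃ b, (a, b) ∈ l' := by
  classical
  by_cases ha : ∃ b, (a, b) ∈ l
  · exact ⟨l, hl, List.Subset.refl l, ha⟩
  push_neg at ha
  set U : Finset ℕ := (l.toFinset.filter (fun p => Γ.Adj a p.1)).image Prod.snd with hU
  set W : Finset ℕ := (l.toFinset.filter (fun p => ¬ Γ.Adj a p.1)).image Prod.snd with hW
  have hmemU : ∀ p ∈ l, Γ.Adj a p.1 → p.2 ∈ U := fun p hp h =>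
    Finset.mem_image.2 ⟨p, Finset.mem_filter.2 ⟨List.mem_toFinset.2 hp, h⟩, rfl⟩
  have hmemW : ∀ p ∈ l, ¬ Γ.Adj a p.1 → p.2 ∈ W := fun p hp h =>
    Finset.mem_image.2 ⟨p, Finset.mem_filter.2 ⟨List.mem_toFinset.2 hp, h⟩, rfl⟩
  have hdis : Disjoint U W := by
    rw [Finset.disjoint_left]
    rintro b hbU hbW
    simp only [hU, hW, Finset.mem_image, Finset.mem_filter, List.mem_toFinset] at hbU hbW
    obtain ⟨p, ⟨hp, hpa⟩, hpb⟩ := hbU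
    obtain ⟨q, ⟨hq, hqa⟩, hqb⟩ := hbW
    have := hl.inj2 p hp q hq (hpb.trans hqb.symm)
    exact hqa (this ▸ hpa)
  obtain ⟨z, hzU, hzW, hzadj, hznadj⟩ := hΔ U W hdis
  have hzne : ∀ p ∈ l, z ≠ p.2 := by
    intro p hp h
    by_cases hpa : Γ.Adj a p.1
    · exact hzU (h ▸ hmemU p hp hpa)
    · exact hzW (h ▸ hmemW p hp hpa)
  have hadj : ∀ p ∈ l, (Γ.Adj a p.1 ↔ Δ.Adj z p.2) := by
    intro p hp
    constructor
    · intro h; exact hzadj _ (hmemU p hp h)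
    · intro h; by_contra h'
      exact hznadj _ (hmemW p hp h') h
  have hane : ∀ q ∈ l, q.1 ≠ a := by
    intro q hq h
    exact ha q.2 (by simpa [← h] using hq)
  refine ⟨(a, z) :: l, ?_, List.subset_cons_self _ _, z, List.mem_cons_self⟩
  constructor
  · intro p hp q hq h
    rw [List.mem_cons] at hp hq
    rcases hp with rfl | hp <;> rcases hq with rfl | hq
    · rfl
    · exact absurd h.symm (hane q hq)
    · exact absurd h (hane p hp)
    · exact hl.inj1 p hp q hq h
  · intro p hp q hq h
    rw [List.mem_cons] at hp hq
    rcases hp with rfl | hp <;> rcases hq with rfl | hq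
    · rfl
    · exact absurd h.symm (fun h' => hzne q hq h'.symm)
    · exact absurd h (fun h' => hzne p hp h'.symm)
    · exact hl.inj2 p hp q hq h
  · intro p hp q hq
    rw [List.mem_cons] at hp hq
    rcases hp with rfl | hp <;> rcases hq with rfl | hq
    · exact iff_of_false (Γ.loopless.irrefl a) (Δ.loopless.irrefl z)
    · exact hadj q hq
    · rw [Γ.adj_comm, Δ.adj_comm]; exact hadj p hp
    · exact hl.adj p hp q hq

lemma IsPIso.extend_right {Γ Δ : SimpleGraph ℕ} (hΓ : Γ.HasExtensionProperty)
    {l : List (ℕ × ℕ)} (hl : IsPIso Γ Δ l) (b : ℕ) :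
    ∃ l', IsPIso Γ Δ l' ∧ l ⊆ l' ∧ ∃ a, (a, b) ∈ l' := by
  obtain ⟨m, hm, hlm, c, hc⟩ := hl.swap.extend_left hΓ b
  refine ⟨m.map Prod.swap, hm.swap, ?_, c, ?_⟩
  · intro x hx
    have : Prod.swap x ∈ m := hlm (List.mem_map.2 ⟨x, hx, rfl⟩)
    exact List.mem_map.2 ⟨Prod.swap x, this, Prod.swap_swap x⟩
  · exact List.mem_map.2 ⟨(b, c), hc, rfl⟩

lemma IsPIso.extend_both {Γ Δ : SimpleGraph ℕ} (hΓ : Γ.HasExtensionProperty)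
    (hΔ : Δ.HasExtensionProperty) {l : List (ℕ × ℕ)} (hl : IsPIso Γ Δ l) (n : ℕ) :
    ∃ l', IsPIso Γ Δ l' ∧ l ⊆ l' ∧ (∃ b, (n, b) ∈ l') ∧ (∃ a, (a, n) ∈ l') := by
  obtain ⟨m, hm, hlm, b, hb⟩ := hl.extend_left hΔ n
  obtain ⟨l', hl', hml', a, hab⟩ := hm.extend_right hΓ n
  exact ⟨l', hl', List.Subset.trans hlm hml', ⟨b, hml' hb⟩, a, hab⟩

lemma iso_of_extension {Γ Δ : SimpleGraph ℕ} (hΓ : Γ.HasExtensionProperty)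
    (hΔ : Δ.HasExtensionProperty) : Nonempty (Γ ≃g Δ) := by
  classical
  choose F hF1 hF2 hF3 hF4 using
    fun (l : {l : List (ℕ × ℕ) // IsPIso Γ Δ l}) (n : ℕ) => l.2.extend_both hΓ hΔ n
  let c : ℕ → {l : List (ℕ × ℕ) // IsPIso Γ Δ l} := fun n =>
    Nat.rec ⟨[], by constructor <;> simp⟩ (fun n p => ⟨F p n, hF1 p n⟩) n
  have hmono : ∀ m n, m ≤ n → (c m).1 ⊆ (c n).1 := by
    intro m n h
    induction h with
    | refl => exact List.Subset.refl _
    | step h ih => exact fun x hx => (hF2 _ _) (ih hx)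
  have hdom : ∀ a : ℕ, ∃ b, (a, b) ∈ (c (a + 1)).1 := fun a => hF3 (c a) a
  have hrng : ∀ b : ℕ, ∃ a, (a, b) ∈ (c (b + 1)).1 := fun b => hF4 (c b) b
  have hcomp1 : ∀ m n a b b', (a, b) ∈ (c m).1 → (a, b') ∈ (c n).1 → b = b' := by
    intro m n a b b' hp hq
    have := (c (max m n)).2.inj1 (a, b) (hmono m _ (le_max_left m n) hp) (a, b')
      (hmono n _ (le_max_right m n) hq) rfl
    exact congrArg Prod.snd this
  have hcomp2 : ∀ m n a a' b, (a, b) ∈ (c m).1 → (a', b) ∈ (c n).1 → a = a' := by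
    intro m n a a' b hp hq
    have := (c (max m n)).2.inj2 (a, b) (hmono m _ (le_max_left m n) hp) (a', b)
      (hmono n _ (le_max_right m n) hq) rfl
    exact congrArg Prod.fst this
  have hcadj : ∀ m n a b a' b', (a, b) ∈ (c m).1 → (a', b') ∈ (c n).1 →
      (Γ.Adj a a' ↔ Δ.Adj b b') := by
    intro m n a b a' b' hp hq
    exact (c (max m n)).2.adj (a, b) (hmono m _ (le_max_left m n) hp) (a', b')
      (hmono n _ (le_max_right m n) hq)
  let g : ℕ → ℕ := fun a => (hdom a).choose
  let g' : ℕ → ℕ := fun b => (hrng b).choose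
  have hg : ∀ a, (a, g a) ∈ (c (a + 1)).1 := fun a => (hdom a).choose_spec
  have hg' : ∀ b, (g' b, b) ∈ (c (b + 1)).1 := fun b => (hrng b).choose_spec
  have hli : ∀ a, g' (g a) = a := fun a => hcomp2 (g a + 1) (a + 1) (g' (g a)) a (g a) (hg' (g a)) (hg a)
  have hri : ∀ b, g (g' b) = b := fun b => hcomp1 (g' b + 1) (b + 1) (g' b) (g (g' b)) b (hg (g' b)) (hg' b)
  exact ⟨{ toEquiv := ⟨g, g', hli, hri⟩,
           map_rel_iff' := fun {a b} => by
             show Δ.Adj (g a) (g b) ↔ Γ.Adj a b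
             exact (hcadj (a + 1) (b + 1) a (g a) b (g b) (hg a) (hg b)).symm }⟩
open Set in
/-- The (open dense) set of codes witnessing one instance of the extension property. -/
def extSet (p : Finset ℕ × Finset ℕ) : Set GraphCode :=
  {f | Disjoint p.1 p.2 → ∃ z, z ∉ p.1 ∧ z ∉ p.2 ∧ (∀ u ∈ p.1, (graphOfCode f).Adj z u) ∧
    (∀ w ∈ p.2, ¬ (graphOfCode f).Adj z w)}

lemma isOpen_coord (i : {e : Sym2 ℕ // ¬ e.IsDiag}) (b : Bool) :
    IsOpen {f : GraphCode | f i = b} := by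
  have : {f : GraphCode | f i = b} = (fun f : GraphCode => f i) ⁻¹' {b} := by
    ext f; simp
  rw [this]
  exact IsOpen.preimage (continuous_apply i) (isOpen_discrete {b})

lemma isOpen_extSet (p : Finset ℕ × Finset ℕ) : IsOpen (extSet p) := by
  by_cases hd : Disjoint p.1 p.2
  · have heq : extSet p =
        ⋃ z ∈ {z : ℕ | z ∉ p.1 ∧ z ∉ p.2},
          ((⋂ u ∈ p.1, {f : GraphCode | (graphOfCode f).Adj z u}) ∩
           (⋂ w ∈ p.2, {f : GraphCode | ¬ (graphOfCode f).Adj z w})) := by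
      ext f
      simp only [extSet, hd, forall_true_left, Set.mem_setOf_eq, Set.mem_iUnion,
        Set.mem_inter_iff, Set.mem_iInter, exists_prop]
      constructor
      · rintro ⟨z, h1, h2, h3, h4⟩; exact ⟨z, ⟨h1, h2⟩, h3, h4⟩
      · rintro ⟨z, ⟨h1, h2⟩, h3, h4⟩; exact ⟨z, h1, h2, h3, h4⟩
    rw [heq]
    refine isOpen_biUnion fun z hz => IsOpen.inter ?_ ?_
    · refine isOpen_biInter_finset fun u hu => ?_
      have hne : z ≠ u := fun h => hz.1 (h ▸ hu)
      have : {f : GraphCode | (graphOfCode f).Adj z u} =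
          {f : GraphCode | f ⟨s(z, u), by simpa [Sym2.mk_isDiag_iff] using hne⟩ = true} := by
        ext f; exact adj_graphOfCode f hne
      rw [this]; exact isOpen_coord _ _
    · refine isOpen_biInter_finset fun w hw => ?_
      have hne : z ≠ w := fun h => hz.2 (h ▸ hw)
      have : {f : GraphCode | ¬ (graphOfCode f).Adj z w} =
          {f : GraphCode | f ⟨s(z, w), by simpa [Sym2.mk_isDiag_iff] using hne⟩ = false} := by
        ext f
        rw [Set.mem_setOf_eq, Set.mem_setOf_eq, adj_graphOfCode f hne, Bool.not_eq_true]
      rw [this]; exact isOpen_coord _ _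
  · have : extSet p = Set.univ := by
      ext f; simp [extSet, hd]
    rw [this]; exact isOpen_univ

lemma sym2_finite (e : Sym2 ℕ) : {x : ℕ | x ∈ e}.Finite := by
  induction e using Sym2.ind with
  | _ a b =>
    have : {x : ℕ | x ∈ s(a, b)} = {a, b} := by ext x; simp [Sym2.mem_iff]
    rw [this]; exact (Set.finite_singleton b).insert a

lemma dense_extSet (p : Finset ℕ × Finset ℕ) : Dense (extSet p) := by
  classical
  by_cases hd : Disjoint p.1 p.2
  swap
  · have : extSet p = Set.univ := by ext f; simp [extSet, hd]
    rw [this]; exact dense_univ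
  intro f
  rw [mem_closure_iff_nhds]
  intro t ht
  rw [nhds_pi] at ht
  obtain ⟨I, hIfin, T, hT, hsub⟩ := Filter.mem_pi.1 ht
  have hTf : ∀ i, f i ∈ T i := fun i => mem_nhds_discrete.1 (hT i)
  set B : Set ℕ := (↑p.1 ∪ ↑p.2) ∪ ⋃ i ∈ I, {x : ℕ | x ∈ i.1} with hB
  have hBfin : B.Finite :=
    ((p.1.finite_toSet.union p.2.finite_toSet).union
      (Set.Finite.biUnion hIfin fun i _ => sym2_finite i.1))
  obtain ⟨z, hz⟩ := hBfin.exists_notMem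
  have hz1 : z ∉ p.1 := fun h => hz (Or.inl (Or.inl h))
  have hz2 : z ∉ p.2 := fun h => hz (Or.inl (Or.inr h))
  have hz3 : ∀ i ∈ I, z ∉ i.1 := fun i hi h =>
    hz (Or.inr (Set.mem_biUnion hi h))
  set g : GraphCode := fun i =>
    if (∃ u ∈ p.1, i.1 = s(z, u)) then true
    else if (∃ w ∈ p.2, i.1 = s(z, w)) then false else f i with hg
  refine ⟨g, ?_, ?_⟩
  · apply hsub
    intro i hi
    have h1 : ¬ (∃ u ∈ p.1, i.1 = s(z, u)) := by
      rintro ⟨u, -, h⟩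
      exact hz3 i hi (h ▸ Sym2.mem_mk_left z u)
    have h2 : ¬ (∃ w ∈ p.2, i.1 = s(z, w)) := by
      rintro ⟨w, -, h⟩
      exact hz3 i hi (h ▸ Sym2.mem_mk_left z w)
    have : g i = f i := by rw [hg]; simp only [h1, h2, if_false]
    rw [this]; exact hTf i
  · intro _
    refine ⟨z, hz1, hz2, ?_, ?_⟩
    · intro u hu
      have hne : z ≠ u := fun h => hz1 (h ▸ hu)
      rw [adj_graphOfCode g hne]
      have h1 : ∃ u' ∈ p.1, (s(z, u) : Sym2 ℕ) = s(z, u') := ⟨u, hu, rfl⟩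
      rw [hg]; simp only [h1, if_true]
    · intro w hw
      have hne : z ≠ w := fun h => hz2 (h ▸ hw)
      rw [adj_graphOfCode g hne, Bool.not_eq_true]
      have h1 : ¬ (∃ u ∈ p.1, (s(z, w) : Sym2 ℕ) = s(z, u)) := by
        rintro ⟨u, hu, h⟩
        rcases Sym2.eq_iff.1 h with ⟨-, rfl⟩ | ⟨h1, -⟩
        · exact (Finset.disjoint_left.1 hd hu) hw
        · exact hz1 (h1 ▸ hu)
      have h2 : ∃ w' ∈ p.2, (s(z, w) : Sym2 ℕ) = s(z, w') := ⟨w, hw, rfl⟩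
      rw [hg]; simp only [h1, h2, if_false, if_true]

/-- In the product (Cantor) topology on the space of codes, the set of codes whose
graph has the extension property is comeager; consequently, for any countable graph
`Δ` with the extension property (i.e. any copy of the random graph `R`), the set of
codes whose graph is isomorphic to `Δ` is comeager. -/
theorem extensionProperty_residual :
    ({f : GraphCode | (graphOfCode f).HasExtensionProperty} ∈ residual GraphCode) ∧
    (∀ Δ : SimpleGraph ℕ, Δ.HasExtensionProperty →
      {f : GraphCode | Nonempty (graphOfCode f ≃g Δ)} ∈ residual GraphCode) := by
  have key : {f : GraphCode | (graphOfCode f).HasExtensionProperty} ∈ residual GraphCode := by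
    have heq : {f : GraphCode | (graphOfCode f).HasExtensionProperty} =
        ⋂ p : Finset ℕ × Finset ℕ, extSet p := by
      ext f
      simp only [Set.mem_iInter, Set.mem_setOf_eq, extSet, Prod.forall]
      exact ⟨fun h a b => h a b, fun h a b => h a b⟩
    rw [heq]
    exact countable_iInter_mem.2 fun q =>
      residual_of_dense_open (isOpen_extSet q) (dense_extSet q)
  exact ⟨key, fun Δ hΔ => Filter.mem_of_superset key fun f hf => iso_of_extension hf hΔ⟩
end

section
/- If Γ is a graph on a countably infinite vertex set having the extension property, then the automorphism group of Γ has cardinality 2^{ℵ_0} (the cardinality of the continuum). -/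
attribute [local instance] Classical.propDecidable

namespace ExtAux

variable {V : Type} (Γ : SimpleGraph V)

/-- `p` is the graph of a finite partial isomorphism. -/
def Good (p : Finset (V × V)) : Prop :=
  ∀ a ∈ p, ∀ b ∈ p, (a.1 = b.1 ↔ a.2 = b.2) ∧ (Γ.Adj a.1 b.1 ↔ Γ.Adj a.2 b.2)

variable {Γ}

lemma good_empty : Good Γ (∅ : Finset (V × V)) := by intro a ha; simp at ha

lemma extend (hΓ : Γ.HasExtensionProperty) {p : Finset (V × V)} (hp : Good Γ p)
    {v : V} (hv : ∀ a ∈ p, a.1 ≠ v) (S : Finset V) (hS : ∀ s ∈ S, ∀ a ∈ p, s ≠ a.2) :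
    ∃ w, w ∉ S ∧ (∀ a ∈ p, a.2 ≠ w) ∧ Good Γ (insert (v, w) p) := by
  classical
  set U : Finset V := (p.filter fun a => Γ.Adj v a.1).image Prod.snd with hU
  set W : Finset V := S ∪ (p.filter fun a => ¬ Γ.Adj v a.1).image Prod.snd with hW
  have hdisj : Disjoint U W := by
    rw [Finset.disjoint_left]
    rintro x hxU hxW
    obtain ⟨a, ha, rfl⟩ := Finset.mem_image.1 hxU
    have haP := (Finset.mem_filter.1 ha).1
    have haA := (Finset.mem_filter.1 ha).2
    rcases Finset.mem_union.1 hxW with h | h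
    · exact hS _ h a haP rfl
    · obtain ⟨b, hb, hba⟩ := Finset.mem_image.1 h
      have hbP := (Finset.mem_filter.1 hb).1
      have hbA := (Finset.mem_filter.1 hb).2
      have : a.1 = b.1 := ((hp a haP b hbP).1).2 hba.symm
      exact hbA (this ▸ haA)
  obtain ⟨z, hzU, hzW, hadj, hnadj⟩ := hΓ U W hdisj
  have hfresh : ∀ a ∈ p, a.2 ≠ z := by
    intro a ha h
    by_cases hA : Γ.Adj v a.1
    · exact hzU (Finset.mem_image.2 ⟨a, Finset.mem_filter.2 ⟨ha, hA⟩, h⟩)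
    · exact hzW (Finset.mem_union.2 (Or.inr (Finset.mem_image.2 ⟨a, Finset.mem_filter.2 ⟨ha, hA⟩, h⟩)))
  have hzS : z ∉ S := fun h => hzW (Finset.mem_union.2 (Or.inl h))
  refine ⟨z, hzS, hfresh, ?_⟩
  have key : ∀ a ∈ p, (v = a.1 ↔ z = a.2) ∧ (Γ.Adj v a.1 ↔ Γ.Adj z a.2) := by
    intro a ha
    constructor
    · constructor
      · intro h; exact absurd h.symm (hv a ha)
      · intro h; exact absurd h.symm (hfresh a ha)
    · constructor
      · intro h
        exact hadj _ (Finset.mem_image.2 ⟨a, Finset.mem_filter.2 ⟨ha, h⟩, rfl⟩)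
      · intro h
        by_contra hA
        exact hnadj _ (Finset.mem_union.2 (Or.inr
          (Finset.mem_image.2 ⟨a, Finset.mem_filter.2 ⟨ha, hA⟩, rfl⟩))) h
  intro a ha b hb
  rcases Finset.mem_insert.1 ha with rfl | ha <;> rcases Finset.mem_insert.1 hb with rfl | hb
  · exact ⟨by simp, by simp⟩
  · exact key b hb
  · refine ⟨⟨fun h => ((key a ha).1.1 h.symm).symm, fun h => ((key a ha).1.2 h.symm).symm⟩, ?_⟩
    rw [Γ.adj_comm a.1 v, Γ.adj_comm a.2 z]; exact (key a ha).2
  · exact hp a ha b hb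


lemma good_swap {p : Finset (V × V)} (hp : Good Γ p) : Good Γ (p.image Prod.swap) := by
  intro a ha b hb
  obtain ⟨a', ha', rfl⟩ := Finset.mem_image.1 ha
  obtain ⟨b', hb', rfl⟩ := Finset.mem_image.1 hb
  exact ⟨(hp a' ha' b' hb').1.symm, (hp a' ha' b' hb').2.symm⟩

lemma extendBack (hΓ : Γ.HasExtensionProperty) {p : Finset (V × V)} (hp : Good Γ p)
    {y : V} (hy : ∀ a ∈ p, a.2 ≠ y) :
    ∃ w, (∀ a ∈ p, a.1 ≠ w) ∧ Good Γ (insert (w, y) p) := by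
  have hv : ∀ a ∈ p.image Prod.swap, a.1 ≠ y := by
    intro a ha
    obtain ⟨a', ha', rfl⟩ := Finset.mem_image.1 ha
    exact hy a' ha'
  obtain ⟨w, _, hw2, hw3⟩ := extend hΓ (good_swap hp) hv ∅ (by simp)
  refine ⟨w, ?_, ?_⟩
  · intro a ha
    exact hw2 a.swap (Finset.mem_image.2 ⟨a, ha, rfl⟩)
  · have := good_swap hw3
    rwa [Finset.image_insert, Finset.image_image, show Prod.swap ∘ Prod.swap = @id (V × V) from funext (fun x => Prod.swap_swap x), Finset.image_id] at this

noncomputable def freshV [Infinite V] (p : Finset (V × V)) : V :=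
  Classical.choose (Infinite.exists_notMem_finset (p.image Prod.fst))

lemma freshV_spec [Infinite V] (p : Finset (V × V)) : ∀ a ∈ p, a.1 ≠ freshV p := by
  intro a ha h
  exact Classical.choose_spec (Infinite.exists_notMem_finset (p.image Prod.fst))
    (Finset.mem_image.2 ⟨a, ha, h⟩)

variable [Infinite V]

lemma split_exists (hΓ : Γ.HasExtensionProperty) {p : Finset (V × V)} (hp : Good Γ p) :
    ∃ q : V × V, q.1 ≠ q.2 ∧ (∀ a ∈ p, a.2 ≠ q.1) ∧ (∀ a ∈ p, a.2 ≠ q.2) ∧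
      Good Γ (insert (freshV p, q.1) p) ∧ Good Γ (insert (freshV p, q.2) p) := by
  obtain ⟨w₁, _, h12, h13⟩ := extend hΓ hp (freshV_spec p) ∅ (by simp)
  obtain ⟨w₂, h21, h22, h23⟩ := extend hΓ hp (freshV_spec p) {w₁}
    (by intro s hs a ha; rw [Finset.mem_singleton] at hs; subst hs; exact h12 a ha ∘ Eq.symm)
  exact ⟨(w₁, w₂), fun h => h21 (Finset.mem_singleton.2 h.symm), h12, h22, h13, h23⟩

variable (Γ) in
noncomputable def stepSplit (hΓ : Γ.HasExtensionProperty) (p : Finset (V × V)) (b : Bool) :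
    Finset (V × V) :=
  if h : Good Γ p then
    insert (freshV p,
      if b then (Classical.choose (split_exists hΓ h)).1
      else (Classical.choose (split_exists hΓ h)).2) p
  else p

variable (Γ) in
noncomputable def extDom (hΓ : Γ.HasExtensionProperty) (p : Finset (V × V)) (x : V) :
    Finset (V × V) :=
  if h : Good Γ p ∧ ∀ a ∈ p, a.1 ≠ x then
    insert (x, Classical.choose (extend hΓ h.1 h.2 ∅ (by simp))) p
  else p

variable (Γ) in
noncomputable def extRan (hΓ : Γ.HasExtensionProperty) (p : Finset (V × V)) (y : V) :
    Finset (V × V) :=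
  if h : Good Γ p ∧ ∀ a ∈ p, a.2 ≠ y then
    insert (Classical.choose (extendBack hΓ h.1 h.2), y) p
  else p

-- basic properties
lemma subset_stepSplit (hΓ) (p : Finset (V × V)) (b : Bool) : p ⊆ stepSplit Γ hΓ p b := by
  unfold stepSplit; split <;> simp [Finset.subset_insert]

lemma subset_extDom (hΓ) (p : Finset (V × V)) (x : V) : p ⊆ extDom Γ hΓ p x := by
  unfold extDom; split <;> simp [Finset.subset_insert]

lemma subset_extRan (hΓ) (p : Finset (V × V)) (y : V) : p ⊆ extRan Γ hΓ p y := by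
  unfold extRan; split <;> simp [Finset.subset_insert]

lemma good_stepSplit (hΓ) {p : Finset (V × V)} (hp : Good Γ p) (b : Bool) :
    Good Γ (stepSplit Γ hΓ p b) := by
  unfold stepSplit
  rw [dif_pos hp]
  obtain ⟨-, -, -, h4, h5⟩ := Classical.choose_spec (split_exists hΓ hp)
  cases b
  · exact h5
  · exact h4

lemma good_extDom (hΓ) {p : Finset (V × V)} (hp : Good Γ p) (x : V) :
    Good Γ (extDom Γ hΓ p x) := by
  unfold extDom; split
  · next h => exact (Classical.choose_spec (extend hΓ h.1 h.2 ∅ (by simp))).2.2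
  · exact hp

lemma good_extRan (hΓ) {p : Finset (V × V)} (hp : Good Γ p) (y : V) :
    Good Γ (extRan Γ hΓ p y) := by
  unfold extRan; split
  · next h => exact (Classical.choose_spec (extendBack hΓ h.1 h.2)).2
  · exact hp

lemma mem_dom_extDom (hΓ) {p : Finset (V × V)} (hp : Good Γ p) (x : V) :
    ∃ w, (x, w) ∈ extDom Γ hΓ p x := by
  unfold extDom; split
  · exact ⟨_, Finset.mem_insert_self _ _⟩
  · next h =>
    push_neg at h
    obtain ⟨a, ha, ha1⟩ := h hp
    exact ⟨a.2, by rwa [← ha1]⟩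

lemma mem_ran_extRan (hΓ) {p : Finset (V × V)} (hp : Good Γ p) (y : V) :
    ∃ w, (w, y) ∈ extRan Γ hΓ p y := by
  unfold extRan; split
  · exact ⟨_, Finset.mem_insert_self _ _⟩
  · next h =>
    push_neg at h
    obtain ⟨a, ha, ha2⟩ := h hp
    exact ⟨a.1, by rwa [← ha2]⟩


noncomputable def splitVal (hΓ : Γ.HasExtensionProperty) (p : Finset (V × V)) (b : Bool) : V :=
  if h : Good Γ p then
    (if b then (Classical.choose (split_exists hΓ h)).1
     else (Classical.choose (split_exists hΓ h)).2)
  else Classical.arbitrary V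

lemma splitVal_mem (hΓ : Γ.HasExtensionProperty) {p : Finset (V × V)} (hp : Good Γ p) (b : Bool) :
    (freshV p, splitVal hΓ p b) ∈ stepSplit Γ hΓ p b := by
  unfold splitVal stepSplit
  rw [dif_pos hp, dif_pos hp]
  exact Finset.mem_insert_self _ _

lemma splitVal_ne (hΓ : Γ.HasExtensionProperty) {p : Finset (V × V)} (hp : Good Γ p) :
    splitVal hΓ p true ≠ splitVal hΓ p false := by
  unfold splitVal
  rw [dif_pos hp, dif_pos hp]
  exact (Classical.choose_spec (split_exists hΓ hp)).1

section Chain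

variable (Γ) (hΓ : Γ.HasExtensionProperty) (e : V ≃ ℕ)

noncomputable def step (p : Finset (V × V)) (b : Bool) (n : ℕ) : Finset (V × V) :=
  extRan Γ hΓ (extDom Γ hΓ (stepSplit Γ hΓ p b) (e.symm n)) (e.symm n)

noncomputable def chain (σ : ℕ → Bool) : ℕ → Finset (V × V)
  | 0 => ∅
  | n + 1 => step Γ hΓ e (chain σ n) (σ n) n

variable {Γ}

lemma good_chain (σ : ℕ → Bool) (n : ℕ) : Good Γ (chain Γ hΓ e σ n) := by
  induction n with
  | zero => exact good_empty
  | succ n ih => exact good_extRan hΓ (good_extDom hΓ (good_stepSplit hΓ ih _) _) _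

lemma stepSplit_subset_chain (σ : ℕ → Bool) (n : ℕ) :
    stepSplit Γ hΓ (chain Γ hΓ e σ n) (σ n) ⊆ chain Γ hΓ e σ (n + 1) := by
  show stepSplit Γ hΓ (chain Γ hΓ e σ n) (σ n) ⊆ step Γ hΓ e (chain Γ hΓ e σ n) (σ n) n
  exact (subset_extDom hΓ _ _).trans (subset_extRan hΓ _ _)

lemma chain_subset_succ (σ : ℕ → Bool) (n : ℕ) :
    chain Γ hΓ e σ n ⊆ chain Γ hΓ e σ (n + 1) :=
  (subset_stepSplit _ _ _).trans (stepSplit_subset_chain hΓ e σ n)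

lemma chain_mono (σ : ℕ → Bool) {m n : ℕ} (h : m ≤ n) :
    chain Γ hΓ e σ m ⊆ chain Γ hΓ e σ n := by
  induction n with
  | zero => simpa [Nat.le_zero.1 h]
  | succ n ih =>
    rcases Nat.lt_or_ge m (n+1) with h' | h'
    · exact (ih (Nat.lt_succ_iff.1 h')).trans (chain_subset_succ hΓ e σ n)
    · have : m = n + 1 := le_antisymm h h'
      simp [this]

lemma chain_dom (σ : ℕ → Bool) (n : ℕ) :
    ∃ w, (e.symm n, w) ∈ chain Γ hΓ e σ (n + 1) := by
  obtain ⟨w, hw⟩ := mem_dom_extDom hΓ (good_stepSplit hΓ (good_chain hΓ e σ n) (σ n)) (e.symm n)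
  refine ⟨w, ?_⟩
  show (e.symm n, w) ∈ step Γ hΓ e (chain Γ hΓ e σ n) (σ n) n
  exact subset_extRan hΓ _ _ hw

lemma chain_ran (σ : ℕ → Bool) (n : ℕ) :
    ∃ w, (w, e.symm n) ∈ chain Γ hΓ e σ (n + 1) := by
  show ∃ w, (w, e.symm n) ∈ step Γ hΓ e (chain Γ hΓ e σ n) (σ n) n
  exact mem_ran_extRan hΓ (good_extDom hΓ (good_stepSplit hΓ (good_chain hΓ e σ n) (σ n)) _) _

lemma chain_agree {σ τ : ℕ → Bool} {n : ℕ} (h : ∀ k < n, σ k = τ k) :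
    chain Γ hΓ e σ n = chain Γ hΓ e τ n := by
  induction n with
  | zero => rfl
  | succ n ih =>
    have h1 : chain Γ hΓ e σ n = chain Γ hΓ e τ n :=
      ih (fun k hk => h k (hk.trans (Nat.lt_succ_self n)))
    show step Γ hΓ e (chain Γ hΓ e σ n) (σ n) n = step Γ hΓ e (chain Γ hΓ e τ n) (τ n) n
    rw [h1, h n (Nat.lt_succ_self n)]

/-- The limit relation. -/
def Rel (σ : ℕ → Bool) (x y : V) : Prop := ∃ n, (x, y) ∈ chain Γ hΓ e σ n

lemma rel_total (σ : ℕ → Bool) (x : V) : ∃ y, Rel hΓ e σ x y := by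
  obtain ⟨w, hw⟩ := chain_dom hΓ e σ (e x)
  rw [Equiv.symm_apply_apply] at hw
  exact ⟨w, _, hw⟩

lemma rel_surj (σ : ℕ → Bool) (y : V) : ∃ x, Rel hΓ e σ x y := by
  obtain ⟨w, hw⟩ := chain_ran hΓ e σ (e y)
  rw [Equiv.symm_apply_apply] at hw
  exact ⟨w, _, hw⟩

lemma rel_both {σ : ℕ → Bool} {x₁ y₁ x₂ y₂ : V} (h₁ : Rel hΓ e σ x₁ y₁)
    (h₂ : Rel hΓ e σ x₂ y₂) :
    (x₁ = x₂ ↔ y₁ = y₂) ∧ (Γ.Adj x₁ x₂ ↔ Γ.Adj y₁ y₂) := by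
  obtain ⟨m, hm⟩ := h₁
  obtain ⟨n, hn⟩ := h₂
  have hm' := chain_mono hΓ e σ (Nat.le_max_left m n) hm
  have hn' := chain_mono hΓ e σ (Nat.le_max_right m n) hn
  exact good_chain hΓ e σ (max m n) _ hm' _ hn'

lemma rel_func {σ : ℕ → Bool} {x y₁ y₂ : V} (h₁ : Rel hΓ e σ x y₁)
    (h₂ : Rel hΓ e σ x y₂) : y₁ = y₂ :=
  (rel_both hΓ e h₁ h₂).1.1 rfl

lemma rel_inj {σ : ℕ → Bool} {x₁ x₂ y : V} (h₁ : Rel hΓ e σ x₁ y)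
    (h₂ : Rel hΓ e σ x₂ y) : x₁ = x₂ :=
  (rel_both hΓ e h₁ h₂).1.2 rfl

noncomputable def F (σ : ℕ → Bool) (x : V) : V := Classical.choose (rel_total hΓ e σ x)

lemma F_rel (σ : ℕ → Bool) (x : V) : Rel hΓ e σ x (F hΓ e σ x) :=
  Classical.choose_spec (rel_total hΓ e σ x)

lemma F_eq {σ : ℕ → Bool} {x y : V} (h : Rel hΓ e σ x y) : F hΓ e σ x = y :=
  rel_func hΓ e (F_rel hΓ e σ x) h

lemma F_bij (σ : ℕ → Bool) : Function.Bijective (F hΓ e σ) := by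
  constructor
  · intro x₁ x₂ h
    exact rel_inj hΓ e (F_rel hΓ e σ x₁) (h ▸ F_rel hΓ e σ x₂)
  · intro y
    obtain ⟨x, hx⟩ := rel_surj hΓ e σ y
    exact ⟨x, F_eq hΓ e hx⟩

noncomputable def auto (σ : ℕ → Bool) : Γ ≃g Γ where
  toEquiv := Equiv.ofBijective (F hΓ e σ) (F_bij hΓ e σ)
  map_rel_iff' := by
    intro a b
    exact ((rel_both hΓ e (F_rel hΓ e σ a) (F_rel hΓ e σ b)).2).symm

lemma auto_injective : Function.Injective (auto hΓ e) := by
  intro σ τ h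
  by_contra hne
  have hex : ∃ n, σ n ≠ τ n := by
    by_contra h'
    push_neg at h'
    exact hne (funext h')
  set n₀ := Nat.find hex with hn₀
  have hlt : ∀ k < n₀, σ k = τ k := fun k hk => by
    have := Nat.find_min hex hk
    simpa using this
  have hchain : chain Γ hΓ e σ n₀ = chain Γ hΓ e τ n₀ := chain_agree hΓ e hlt
  set p := chain Γ hΓ e σ n₀ with hpdef
  have hp : Good Γ p := good_chain hΓ e σ n₀
  have hσmem : (freshV p, splitVal hΓ p (σ n₀)) ∈ chain Γ hΓ e σ (n₀ + 1) :=
    stepSplit_subset_chain hΓ e σ n₀ (splitVal_mem hΓ hp (σ n₀))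
  have hτmem : (freshV p, splitVal hΓ p (τ n₀)) ∈ chain Γ hΓ e τ (n₀ + 1) := by
    have := stepSplit_subset_chain hΓ e τ n₀
      (splitVal_mem hΓ (hchain ▸ hp : Good Γ (chain Γ hΓ e τ n₀)) (τ n₀))
    rwa [← hchain] at this
  have hσF : F hΓ e σ (freshV p) = splitVal hΓ p (σ n₀) := F_eq hΓ e ⟨_, hσmem⟩
  have hτF : F hΓ e τ (freshV p) = splitVal hΓ p (τ n₀) := F_eq hΓ e ⟨_, hτmem⟩
  have hFF : F hΓ e σ (freshV p) = F hΓ e τ (freshV p) := by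
    have := congrArg (fun g : Γ ≃g Γ => g (freshV p)) h
    exact this
  have hne' : σ n₀ ≠ τ n₀ := Nat.find_spec hex
  rw [hσF, hτF] at hFF
  rcases Bool.eq_false_or_eq_true (σ n₀) with h1 | h1 <;>
    rcases Bool.eq_false_or_eq_true (τ n₀) with h2 | h2
  · exact hne' (h1.trans h2.symm)
  · rw [h1, h2] at hFF
    first | exact splitVal_ne hΓ hp hFF | exact splitVal_ne hΓ hp hFF.symm
  · rw [h1, h2] at hFF
    first | exact splitVal_ne hΓ hp hFF | exact splitVal_ne hΓ hp hFF.symm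
  · exact hne' (h1.trans h2.symm)

end Chain

end ExtAux

/-- The automorphism group of a countably infinite graph with the extension property
has the cardinality of the continuum. -/
theorem extensionProperty_card_aut {V : Type} [Countable V] [Infinite V]
    (Γ : SimpleGraph V) (hΓ : Γ.HasExtensionProperty) :
    Cardinal.mk (Γ ≃g Γ) = Cardinal.continuum := by
  classical
  obtain ⟨e⟩ : Nonempty (V ≃ ℕ) := nonempty_equiv_of_countable
  apply le_antisymm
  · have h1 : Cardinal.mk (Γ ≃g Γ) ≤ Cardinal.mk (V → V) :=
      Cardinal.mk_le_of_injective (f := fun f : Γ ≃g Γ => (f : V → V)) DFunLike.coe_injective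
    have h2 : Cardinal.mk (V → V) = Cardinal.mk V ^ Cardinal.mk V :=
      (Cardinal.power_def V V).symm
    have h3 : Cardinal.mk V ^ Cardinal.mk V ≤ (Cardinal.aleph0) ^ (Cardinal.aleph0) :=
      (Cardinal.power_le_power_right Cardinal.mk_le_aleph0).trans
        (Cardinal.power_le_power_left Cardinal.aleph0_ne_zero Cardinal.mk_le_aleph0)
    calc Cardinal.mk (Γ ≃g Γ) ≤ Cardinal.mk V ^ Cardinal.mk V := h2 ▸ h1
      _ ≤ (Cardinal.aleph0) ^ (Cardinal.aleph0) := h3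
      _ = Cardinal.continuum := Cardinal.aleph0_power_aleph0
  · have h := Cardinal.mk_le_of_injective (ExtAux.auto_injective hΓ e)
    rwa [show Cardinal.mk (ℕ → Bool) = Cardinal.continuum from by
      rw [Cardinal.mk_arrow]; simp] at h
end

section
/- A graph Γ on a countably infinite vertex set contains a spanning subgraph with the extension property (i.e. contains the random graph R as a spanning subgraph) if and only if every finite set of vertices of Γ has a common neighbour, i.e. for every finite set F of vertices there is a vertex z adjacent in Γ to every vertex of F. -/
namespace SimpleGraph

theorem HasExtensionProperty.exists_common_neighbour {V : Type*} {Δ : SimpleGraph V}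
    (hΔ : Δ.HasExtensionProperty) (F : Finset V) : ∃ z, ∀ v ∈ F, Δ.Adj z v := by
  obtain ⟨z, -, -, hz, -⟩ := hΔ F ∅ (Finset.disjoint_empty_right F)
  exact ⟨z, hz⟩

namespace ExtensionGraph

variable {V : Type*} [DecidableEq V] (c : Finset V → V) (p : ℕ → Finset V × Finset V)

-- `stage c p n` is inlined here, as it is defined from `used`.
def used : ℕ → Finset V
  | 0 => ∅
  | n + 1 =>
    insert (c ((p n).1 ∪ (p n).2 ∪ used n)) ((p n).1 ∪ (p n).2 ∪ used n)

def stage (n : ℕ) : Finset V := (p n).1 ∪ (p n).2 ∪ used c p n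

def witness (n : ℕ) : V := c (stage c p n)

theorem used_succ (n : ℕ) : used c p (n + 1) = insert (witness c p n) (stage c p n) := rfl

theorem used_mono : Monotone (used c p) :=
  monotone_nat_of_le_succ fun n => by
    rw [used_succ, stage]
    exact Finset.subset_union_right.trans (Finset.subset_insert _ _)

theorem stage_subset_used_of_lt {m n : ℕ} (hmn : m < n) : stage c p m ⊆ used c p n :=
  (Finset.subset_insert _ _).trans (used_mono c p hmn)

theorem witness_mem_used_of_lt {m n : ℕ} (hmn : m < n) : witness c p m ∈ used c p n :=
  used_mono c p hmn (Finset.mem_insert_self _ _)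

theorem pair_subset_stage_of_le {m n : ℕ} (hnm : n ≤ m) :
    (p n).1 ∪ (p n).2 ⊆ stage c p m := by
  rcases hnm.lt_or_eq with hlt | rfl
  · exact Finset.subset_union_left.trans
      ((stage_subset_used_of_lt c p hlt).trans Finset.subset_union_right)
  · exact Finset.subset_union_left

variable {c}

theorem witness_notMem_pair_of_le (hc : ∀ F, c F ∉ F) {m n : ℕ} (hnm : n ≤ m) :
    witness c p m ∉ (p n).1 ∪ (p n).2 :=
  fun h => hc _ (pair_subset_stage_of_le c p hnm h)

theorem witness_injective (hc : ∀ F, c F ∉ F) : Function.Injective (witness c p) :=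
  .of_lt_imp_ne fun _ n hmn heq =>
    hc (stage c p n) <| Finset.subset_union_right (s₁ := (p n).1 ∪ (p n).2)
      (heq ▸ witness_mem_used_of_lt c p hmn : witness c p n ∈ used c p n)

end ExtensionGraph

open ExtensionGraph

def extensionGraph {V : Type*} [DecidableEq V] (c : Finset V → V)
    (p : ℕ → Finset V × Finset V) : SimpleGraph V :=
  fromRel fun a b => ∃ n, a = witness c p n ∧ b ∈ (p n).1

variable {V : Type*} [DecidableEq V] {c : Finset V → V} {p : ℕ → Finset V × Finset V}

theorem extensionGraph_le {Γ : SimpleGraph V} (hc : ∀ F, ∀ v ∈ F, Γ.Adj (c F) v) :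
    extensionGraph c p ≤ Γ := by
  rintro a b ⟨-, ⟨n, rfl, hb⟩ | ⟨n, rfl, ha⟩⟩
  · exact hc _ b (Finset.subset_union_left.trans Finset.subset_union_left hb)
  · exact (hc _ a (Finset.subset_union_left.trans Finset.subset_union_left ha)).symm

theorem hasExtensionProperty_extensionGraph (hc : ∀ F, c F ∉ F)
    (hp : Function.Surjective p) : (extensionGraph c p).HasExtensionProperty := by
  intro U W hUW
  obtain ⟨m, hm⟩ := hp (U, W)
  have hU : (p m).1 = U := by rw [hm]
  have hW : (p m).2 = W := by rw [hm]
  have hfresh : witness c p m ∉ U ∪ W := hU ▸ hW ▸ witness_notMem_pair_of_le p hc le_rfl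
  refine ⟨witness c p m, fun h => hfresh (Finset.mem_union_left _ h),
    fun h => hfresh (Finset.mem_union_right _ h), fun u hu => ?_, fun w hw => ?_⟩
  · exact (fromRel_adj _ _ _).2
      ⟨fun h => hfresh (h ▸ Finset.mem_union_left _ hu), .inl ⟨m, rfl, hU ▸ hu⟩⟩
  · rintro ⟨-, ⟨n, hnm, hwn⟩ | ⟨n, rfl, hmn⟩⟩
    · obtain rfl := witness_injective p hc hnm.symm
      exact Finset.disjoint_left.mp hUW (hU ▸ hwn) hw
    · rcases le_total n m with hle | hle
      · exact witness_notMem_pair_of_le p hc hle (Finset.mem_union_left _ hmn)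
      · exact witness_notMem_pair_of_le p hc hle (hW ▸ Finset.mem_union_right _ hw)

end SimpleGraph

theorem spanning_random_iff_common_neighbours_general {V : Type} [Countable V]
    (Γ : SimpleGraph V) :
    (∃ Δ : SimpleGraph V, Δ ≤ Γ ∧ Δ.HasExtensionProperty) ↔
    (∀ F : Finset V, ∃ z : V, ∀ v ∈ F, Γ.Adj z v) := by
  classical
  constructor
  · rintro ⟨Δ, hle, hΔ⟩ F
    obtain ⟨z, hz⟩ := hΔ.exists_common_neighbour F
    exact ⟨z, fun v hv => hle (hz v hv)⟩
  · intro h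
    choose c hc using h
    obtain ⟨p, hp⟩ := exists_surjective_nat (Finset V × Finset V)
    exact ⟨SimpleGraph.extensionGraph c p, SimpleGraph.extensionGraph_le hc,
      SimpleGraph.hasExtensionProperty_extensionGraph (fun F hF => Γ.irrefl (hc F _ hF)) hp⟩

/-- A countably infinite graph `Γ` contains a spanning subgraph with the extension
property (i.e. contains the random graph `R` as a spanning subgraph) iff every finite
set of vertices of `Γ` has a common neighbour. -/
theorem spanning_random_iff_common_neighbours {V : Type} [Countable V] [Infinite V]
    (Γ : SimpleGraph V) :
    (∃ Δ : SimpleGraph V, Δ ≤ Γ ∧ Δ.HasExtensionProperty) ↔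
    (∀ F : Finset V, ∃ z : V, ∀ v ∈ F, Γ.Adj z v) :=
  spanning_random_iff_common_neighbours_general Γ
end

section
/- If a graph Γ on a countably infinite vertex set contains a spanning subgraph with the extension property, then Γ is homomorphism-homogeneous: every homomorphism between finite induced subgraphs of Γ extends to a graph homomorphism from Γ to itself. -/
namespace SimpleGraph

variable {V : Type*} {G : SimpleGraph V}

theorem HasExtensionProperty.exists_forall_adj (hG : G.HasExtensionProperty) (U : Finset V) :
    ∃ z, ∀ u ∈ U, G.Adj z u :=
  let ⟨z, _, _, hz, _⟩ := hG U ∅ (Finset.disjoint_empty_right U)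
  ⟨z, hz⟩

theorem exists_pairwise_adj_seq_of_forall_exists_adj
    (h : ∀ U : Finset V, ∃ z, ∀ u ∈ U, G.Adj z u) (F : Finset V) :
    ∃ c : ℕ → V, (∀ n, ∀ a ∈ F, G.Adj (c n) a) ∧ Pairwise fun m n => G.Adj (c m) (c n) := by
  classical
  choose z hz using h
  set S : ℕ → Finset V := fun n => (fun s => insert (z s) s)^[n] F
  have hS_succ (n : ℕ) : S (n + 1) = insert (z (S n)) (S n) := Function.iterate_succ_apply' ..
  have hS_mono : Monotone S :=
    monotone_nat_of_le_succ fun n => (hS_succ n).symm ▸ Finset.subset_insert _ _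
  have hlt {m n : ℕ} (hmn : m < n) : G.Adj (z (S n)) (z (S m)) :=
    hz _ _ (hS_mono hmn (hS_succ m ▸ Finset.mem_insert_self _ _))
  refine ⟨fun n => z (S n), fun n a ha => hz _ _ (hS_mono n.zero_le ha), fun m n hmn => ?_⟩
  rcases hmn.lt_or_gt with hmn | hnm
  · exact (hlt hmn).symm
  · exact hlt hnm

end SimpleGraph

theorem spanning_random_homomorphismHomogeneous_general {V : Type} [Countable V]
    (Γ : SimpleGraph V) (h : ∃ Δ : SimpleGraph V, Δ ≤ Γ ∧ Δ.HasExtensionProperty) :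
    ∀ (A : Finset V) (f : V → V),
      (∀ x ∈ A, ∀ y ∈ A, Γ.Adj x y → Γ.Adj (f x) (f y)) →
      ∃ g : V → V, (∀ x y : V, Γ.Adj x y → Γ.Adj (g x) (g y)) ∧ ∀ x ∈ A, g x = f x := by
  classical
  intro A f hf
  obtain ⟨Δ, hΔΓ, hΔ⟩ := h
  obtain ⟨c, hcA, hc⟩ :=
    SimpleGraph.exists_pairwise_adj_seq_of_forall_exists_adj hΔ.exists_forall_adj (A.image f)
  obtain ⟨ι, hι⟩ := Countable.exists_injective_nat V
  refine ⟨fun v => if v ∈ A then f v else c (ι v), fun x y hxy => ?_, fun x hx => if_pos hx⟩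
  by_cases hx : x ∈ A <;> by_cases hy : y ∈ A <;> simp only [hx, hy, if_true, if_false]
  · exact hf x hx y hy hxy
  · exact hΔΓ (hcA _ _ (Finset.mem_image_of_mem f hx)).symm
  · exact hΔΓ (hcA _ _ (Finset.mem_image_of_mem f hy))
  · exact hΔΓ (hc (hι.ne hxy.ne))

/-- A countably infinite graph containing a spanning subgraph with the extension
property is homomorphism-homogeneous: every homomorphism between finite induced
subgraphs extends to an endomorphism. -/
theorem spanning_random_homomorphismHomogeneous {V : Type} [Countable V] [Infinite V]
    (Γ : SimpleGraph V) (h : ∃ Δ : SimpleGraph V, Δ ≤ Γ ∧ Δ.HasExtensionProperty) :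
    ∀ (A : Finset V) (f : V → V),
      (∀ x ∈ A, ∀ y ∈ A, Γ.Adj x y → Γ.Adj (f x) (f y)) →
      ∃ g : V → V, (∀ x y : V, Γ.Adj x y → Γ.Adj (g x) (g y)) ∧ ∀ x ∈ A, g x = f x :=
  spanning_random_homomorphismHomogeneous_general Γ h
end

section
/- Let k ≥ 4, let G be a countably infinite group, and let S ⊆ G satisfy 1 ∉ S, S = S^{-1}, and S closed under conjugation (g^{-1}Sg = S for all g ∈ G). Then the Cayley graph of G with connection set S (vertex set G, with x adjacent to y iff x ≠ y and x y^{-1} ∈ S) does not have the K_k-free extension property; that is, Henson's graph H_k is not a normal Cayley graph of any countable group. -/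
/-- The `K_k`-free extension property characterising Henson's graph `H_k`. -/
def SimpleGraph.HasKFreeExtensionProperty {V : Type*} (Γ : SimpleGraph V) (k : ℕ) : Prop :=
  Γ.CliqueFree k ∧
  ∀ U W : Finset V, Disjoint U W →
    (∀ s : Finset V, s ⊆ U → ¬ Γ.IsNClique (k - 1) s) →
    ∃ z, z ∉ U ∧ z ∉ W ∧ (∀ u ∈ U, Γ.Adj z u) ∧ (∀ w ∈ W, ¬ Γ.Adj z w)

/-- For `k ≥ 4`, Henson's graph `H_k` is not a normal Cayley graph of any countable
group: if `G` is a countably infinite group and `S ⊆ G` satisfies `1 ∉ S`, `S = S⁻¹`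
and `S` is closed under conjugation, then the Cayley graph `Cay(G, S)` does not have
the `K_k`-free extension property. -/
theorem henson_not_normal_cayley {k : ℕ} (hk : 4 ≤ k) (G : Type) [Group G]
    [Countable G] [Infinite G] (S : Set G) (h1 : (1 : G) ∉ S) (hinv : S⁻¹ = S)
    (hconj : ∀ g : G, (fun x => g⁻¹ * x * g) '' S = S)
    (Γ : SimpleGraph G) (hΓ : ∀ x y : G, Γ.Adj x y ↔ x ≠ y ∧ x * y⁻¹ ∈ S) :
    ¬ Γ.HasKFreeExtensionProperty k := by
  classical
  rintro ⟨hfree, hext⟩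
  have conjS : ∀ g x : G, x ∈ S → g⁻¹ * x * g ∈ S := by
    intro g x hx
    rw [← hconj g]
    exact ⟨x, hx, rfl⟩
  have conjS' : ∀ g x : G, x ∈ S → g * x * g⁻¹ ∈ S := by
    intro g x hx
    simpa using conjS g⁻¹ x hx
  have invS : ∀ x : G, x ∈ S → x⁻¹ ∈ S := by
    intro x hx
    rw [← hinv]
    simpa using hx
  have symmS : ∀ x y : G, x * y⁻¹ ∈ S → y * x⁻¹ ∈ S := by
    intro x y h
    have h2 := invS _ h
    simpa [mul_inv_rev] using h2
  have neS : ∀ x y : G, x * y⁻¹ ∈ S → x ≠ y := by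
    intro x y h he
    subst he
    simp only [mul_inv_cancel] at h
    exact h1 h
  have adj_iff : ∀ x y : G, Γ.Adj x y ↔ x * y⁻¹ ∈ S := by
    intro x y
    rw [hΓ]
    exact ⟨fun h => h.2, fun h => ⟨neS x y h, h⟩⟩
  have smallfree : ∀ U : Finset G, U.card + 1 < k → ∀ t ⊆ U, ¬ Γ.IsNClique (k - 1) t := by
    intro U hU t ht hcl
    have h1' := Finset.card_le_card ht
    have h2' := hcl.card_eq
    omega
  -- get an element s of S
  obtain ⟨s, hs1, -, hs3, -⟩ :=
    hext {1} ∅ (Finset.disjoint_empty_right _) (smallfree _ (by rw [Finset.card_singleton]; omega))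
  have hsS : s ∈ S := by
    simpa using (adj_iff s 1).1 (hs3 1 (Finset.mem_singleton_self 1))
  have hs_ne1 : s ≠ 1 := fun h => h1 (h ▸ hsS)
  -- build the auxiliary clique T
  have build : ∀ m : ℕ, m + 3 ≤ k → ∃ T : Finset G,
      T.card = m ∧
      (∀ u ∈ T, u ∈ S) ∧
      (∀ u ∈ T, ∀ v ∈ T, u ≠ v → u * v⁻¹ ∈ S) ∧
      (∀ u ∈ T, u ≠ s ∧ u ≠ s⁻¹ ∧ u * s⁻¹ ∉ S ∧ u * s ∉ S) ∧
      (∀ u ∈ T, ∀ v ∈ T, u ≠ v → u ≠ s * v ∧ u * (s * v)⁻¹ ∉ S) := by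
    intro m
    induction m with
    | zero => exact fun _ => ⟨∅, by simp, by simp, by simp, by simp, by simp⟩
    | succ n ih =>
      intro hm
      obtain ⟨T, hcard, hTS, hTadj, hTs, hTd⟩ := ih (by omega)
      set W : Finset G :=
        insert s (insert s⁻¹ (T.image (fun u => s * u) ∪ T.image (fun u => s⁻¹ * u))) with hW
      have hdisj : Disjoint (insert (1 : G) T) W := by
        rw [Finset.disjoint_left]
        intro x hx hxW
        simp only [hW, Finset.mem_insert, Finset.mem_union, Finset.mem_image] at hx hxW
        rcases hx with rfl | hxT
        · rcases hxW with h | h | ⟨u, hu, h⟩ | ⟨u, hu, h⟩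
          · exact hs_ne1 h.symm
          · exact hs_ne1 (inv_eq_one.mp h.symm)
          · exact (hTs u hu).2.1 (eq_inv_of_mul_eq_one_right h)
          · exact (hTs u hu).1 (by simpa using eq_inv_of_mul_eq_one_right h)
        · rcases hxW with h | h | ⟨u, hu, h⟩ | ⟨u, hu, h⟩
          · exact (hTs x hxT).1 h
          · exact (hTs x hxT).2.1 h
          · rcases eq_or_ne x u with rfl | hne
            · exact hs_ne1 (mul_eq_right.mp h)
            · exact (hTd x hxT u hu hne).1 h.symm
          · rcases eq_or_ne x u with rfl | hne
            · exact hs_ne1 (inv_eq_one.mp (mul_eq_right.mp h))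
            · have h' : u = s * x := by rw [← h]; group
              exact (hTd u hu x hxT hne.symm).1 h'
      have hUcard : (insert (1 : G) T).card + 1 < k := by
        have := Finset.card_insert_le (1 : G) T
        omega
      obtain ⟨z, hz1, hz2, hz3, hz4⟩ := hext (insert (1 : G) T) W hdisj (smallfree _ hUcard)
      have hzS : z ∈ S := by
        simpa using (adj_iff z 1).1 (hz3 1 (Finset.mem_insert_self 1 T))
      have hzT : ∀ u ∈ T, z * u⁻¹ ∈ S :=
        fun u hu => (adj_iff _ _).1 (hz3 u (Finset.mem_insert_of_mem hu))
      have hz_notT : z ∉ T := fun h => hz1 (Finset.mem_insert_of_mem h)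
      have hzs_mem : s ∈ W := by rw [hW]; exact Finset.mem_insert_self _ _
      have hzsi_mem : s⁻¹ ∈ W := by
        rw [hW]; exact Finset.mem_insert_of_mem (Finset.mem_insert_self _ _)
      have hzsu_mem : ∀ u ∈ T, s * u ∈ W := by
        intro u hu
        rw [hW]
        exact Finset.mem_insert_of_mem (Finset.mem_insert_of_mem
          (Finset.mem_union_left _ (Finset.mem_image_of_mem _ hu)))
      have hzsiu_mem : ∀ u ∈ T, s⁻¹ * u ∈ W := by
        intro u hu
        rw [hW]
        exact Finset.mem_insert_of_mem (Finset.mem_insert_of_mem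
          (Finset.mem_union_right _ (Finset.mem_image_of_mem _ hu)))
      have hznadj : ∀ w ∈ W, z * w⁻¹ ∉ S := fun w hw h => hz4 w hw ((adj_iff _ _).2 h)
      have hzne : ∀ w ∈ W, z ≠ w := fun w hw h => hz2 (h ▸ hw)
      refine ⟨insert z T, ?_, ?_, ?_, ?_, ?_⟩
      · rw [Finset.card_insert_of_notMem hz_notT, hcard]
      · intro u hu
        rcases Finset.mem_insert.1 hu with hu' | hu'
        · rw [hu']; exact hzS
        · exact hTS u hu'
      · intro u hu v hv hne
        rcases Finset.mem_insert.1 hu with hu' | hu'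
        · rcases Finset.mem_insert.1 hv with hv' | hv'
          · exact absurd (hu'.trans hv'.symm) hne
          · rw [hu']; exact hzT v hv'
        · rcases Finset.mem_insert.1 hv with hv' | hv'
          · rw [hv']; exact symmS _ _ (hzT u hu')
          · exact hTadj u hu' v hv' hne
      · intro u hu
        rcases Finset.mem_insert.1 hu with hu' | hu'
        · rw [hu']
          refine ⟨hzne s hzs_mem, hzne s⁻¹ hzsi_mem, hznadj s hzs_mem, ?_⟩
          have := hznadj s⁻¹ hzsi_mem
          simpa using this
        · exact hTs u hu'
      · intro u hu v hv hne
        rcases Finset.mem_insert.1 hu with hu' | hu'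
        · rcases Finset.mem_insert.1 hv with hv' | hv'
          · exact absurd (hu'.trans hv'.symm) hne
          · rw [hu']
            exact ⟨hzne _ (hzsu_mem v hv'), hznadj _ (hzsu_mem v hv')⟩
        · rcases Finset.mem_insert.1 hv with hv' | hv'
          · rw [hv']
            constructor
            · intro h
              exact hzne _ (hzsiu_mem u hu') (by rw [h]; group)
            · intro h
              have h2 := invS _ h
              have h3 : s * z * u⁻¹ ∈ S := by
                have he : (u * (s * z)⁻¹)⁻¹ = s * z * u⁻¹ := by group
                rwa [he] at h2
              have h4 := conjS s _ h3
              have h5 : z * (s⁻¹ * u)⁻¹ ∈ S := by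
                have he : s⁻¹ * (s * z * u⁻¹) * s = z * (s⁻¹ * u)⁻¹ := by group
                rwa [he] at h4
              exact hznadj _ (hzsiu_mem u hu') h5
          · exact hTd u hu' v hv' hne
  obtain ⟨T, hcard, hTS, hTadj, hTs, hTd⟩ := build (k - 3) (by omega)
  set B : Finset G := T.image (fun u => s * u) with hB
  have hBcard : B.card = k - 3 := by
    rw [hB, Finset.card_image_of_injective _ (mul_right_injective s), hcard]
  have hBnotS : ∀ u ∈ T, s * u ∉ S := by
    intro u hu h
    have h2 := conjS s _ h
    have h3 : s⁻¹ * (s * u) * s = u * s := by group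
    rw [h3] at h2
    exact (hTs u hu).2.2.2 h2
  have hBne1 : ∀ u ∈ T, s * u ≠ 1 := by
    intro u hu h
    exact (hTs u hu).2.1 (eq_inv_of_mul_eq_one_right h)
  set Uf : Finset G := insert (1 : G) (insert s (T ∪ B)) with hUf
  -- Uf is K_{k-1}-free
  have hUffree : ∀ t ⊆ Uf, ¬ Γ.IsNClique (k - 1) t := by
    intro t ht hcl
    have hadj : ∀ a ∈ t, ∀ b ∈ t, a ≠ b → a * b⁻¹ ∈ S := fun a ha b hb hne =>
      (adj_iff _ _).1 (hcl.1 (Finset.mem_coe.mpr ha) (Finset.mem_coe.mpr hb) hne)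
    have hcardt := hcl.card_eq
    have hbound : t.card ≤ k - 2 := by
      have hmem : ∀ x ∈ t, x = 1 ∨ x = s ∨ x ∈ T ∨ ∃ u ∈ T, s * u = x := by
        intro x hx
        have := ht hx
        simp only [hUf, hB, Finset.mem_insert, Finset.mem_union, Finset.mem_image] at this
        tauto
      by_cases h1t : (1 : G) ∈ t <;> by_cases hst : s ∈ t
      · -- both 1 and s in t : t ⊆ {1, s}
        have hsub : t ⊆ {1, s} := by
          intro x hx
          rcases hmem x hx with rfl | rfl | hxT | ⟨u, hu, rfl⟩
          · simp
          · simp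
          · exact absurd (hadj x hx s hst (hTs x hxT).1) (hTs x hxT).2.2.1
          · exfalso
            have h2 := hadj (s * u) hx 1 h1t (hBne1 u hu)
            simp only [inv_one, mul_one] at h2
            exact hBnotS u hu h2
        have := Finset.card_le_card hsub
        have h2 : ({1, s} : Finset G).card ≤ 2 := Finset.card_le_two
        omega
      · -- 1 ∈ t, s ∉ t : t ⊆ insert 1 T
        have hsub : t ⊆ insert (1 : G) T := by
          intro x hx
          rcases hmem x hx with rfl | rfl | hxT | ⟨u, hu, rfl⟩
          · exact Finset.mem_insert_self _ _
          · exact absurd hx hst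
          · exact Finset.mem_insert_of_mem hxT
          · exfalso
            have h2 := hadj (s * u) hx 1 h1t (hBne1 u hu)
            simp only [inv_one, mul_one] at h2
            exact hBnotS u hu h2
        have := Finset.card_le_card hsub
        have h2 := Finset.card_insert_le (1 : G) T
        omega
      · -- s ∈ t, 1 ∉ t : t ⊆ insert s B
        have hsub : t ⊆ insert s B := by
          intro x hx
          rcases hmem x hx with rfl | rfl | hxT | ⟨u, hu, rfl⟩
          · exact absurd hx h1t
          · exact Finset.mem_insert_self _ _
          · exact absurd (hadj x hx s hst (hTs x hxT).1) (hTs x hxT).2.2.1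
          · exact Finset.mem_insert_of_mem (Finset.mem_image_of_mem _ hu)
        have := Finset.card_le_card hsub
        have h2 := Finset.card_insert_le s B
        omega
      · -- neither 1 nor s in t
        have hmatch : ∀ w ∈ T, (s * w) ∈ t → ∀ u ∈ t, u ∈ T → u = w := by
          intro w hw hswt u hut huT
          by_contra hne'
          have hd := hTd u huT w hw hne'
          exact hd.2 (hadj u hut (s * w) hswt hd.1)
        by_cases h2 : ∃ u ∈ t, ∃ v ∈ t, u ∈ T ∧ v ∈ T ∧ u ≠ v
        · obtain ⟨u, hut, v, hvt, huT, hvT, huv⟩ := h2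
          have hsub : t ⊆ T := by
            intro x hx
            rcases hmem x hx with rfl | rfl | hxT | ⟨w, hw, rfl⟩
            · exact absurd hx h1t
            · exact absurd hx hst
            · exact hxT
            · exact absurd ((hmatch w hw hx u hut huT).trans
                (hmatch w hw hx v hvt hvT).symm) huv
          have := Finset.card_le_card hsub
          omega
        · push_neg at h2
          have hsub : t ⊆ (t ∩ T) ∪ B := by
            intro x hx
            rcases hmem x hx with rfl | rfl | hxT | ⟨u, hu, rfl⟩
            · exact absurd hx h1t
            · exact absurd hx hst
            · exact Finset.mem_union_left _ (Finset.mem_inter.mpr ⟨hx, hxT⟩)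
            · exact Finset.mem_union_right _ (Finset.mem_image_of_mem _ hu)
          have hone : (t ∩ T).card ≤ 1 := by
            apply Finset.card_le_one.mpr
            intro a ha b hb
            have ha' := Finset.mem_inter.1 ha
            have hb' := Finset.mem_inter.1 hb
            exact h2 a ha'.1 b hb'.1 ha'.2 hb'.2
          have hc1 := Finset.card_le_card hsub
          have hc2 := Finset.card_union_le (t ∩ T) B
          omega
    omega
  -- final extension
  obtain ⟨y, hy1, -, hy3, -⟩ := hext Uf ∅ (Finset.disjoint_empty_right _) hUffree
  have hm1 : (1 : G) ∈ Uf := by rw [hUf]; exact Finset.mem_insert_self _ _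
  have hms : s ∈ Uf := by
    rw [hUf]; exact Finset.mem_insert_of_mem (Finset.mem_insert_self _ _)
  have hmT : ∀ u ∈ T, u ∈ Uf := by
    intro u hu
    rw [hUf]
    exact Finset.mem_insert_of_mem (Finset.mem_insert_of_mem (Finset.mem_union_left _ hu))
  have hmB : ∀ u ∈ T, s * u ∈ Uf := by
    intro u hu
    rw [hUf, hB]
    exact Finset.mem_insert_of_mem (Finset.mem_insert_of_mem
      (Finset.mem_union_right _ (Finset.mem_image_of_mem _ hu)))
  have hyS : y ∈ S := by
    simpa using (adj_iff y 1).1 (hy3 1 hm1)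
  have hys : y * s⁻¹ ∈ S := (adj_iff _ _).1 (hy3 s hms)
  have hyT : ∀ u ∈ T, y * u⁻¹ ∈ S := fun u hu => (adj_iff _ _).1 (hy3 u (hmT u hu))
  have hyB : ∀ u ∈ T, y * (s * u)⁻¹ ∈ S := fun u hu =>
    (adj_iff _ _).1 (hy3 (s * u) (hmB u hu))
  have hy_ne1 : y ≠ 1 := fun h => h1 (h ▸ hyS)
  -- the final k-clique
  have hsy_notB : s * y ∉ B := by
    intro h
    rw [hB, Finset.mem_image] at h
    obtain ⟨u, hu, h⟩ := h
    have : u = y := mul_left_cancel h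
    exact neS y u (hyT u hu) this.symm
  have hy_notmem : y ∉ insert (s * y) B := by
    intro h
    rcases Finset.mem_insert.1 h with h | h
    · exact hs_ne1 (right_eq_mul.mp h)
    · rw [hB, Finset.mem_image] at h
      obtain ⟨u, hu, h⟩ := h
      exact neS y (s * u) (hyB u hu) h.symm
  have hs_notmem : s ∉ insert y (insert (s * y) B) := by
    intro h
    rcases Finset.mem_insert.1 h with h | h
    · exact neS y s hys h.symm
    · rcases Finset.mem_insert.1 h with h | h
      · exact hy_ne1 (left_eq_mul.mp h)
      · rw [hB, Finset.mem_image] at h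
        obtain ⟨u, hu, h⟩ := h
        have hu1 : u = 1 := by
          have h' : s * u = s * 1 := by rw [h, mul_one]
          exact mul_left_cancel h'
        exact h1 (hu1 ▸ hTS u hu)
  have hK : Γ.IsNClique k (insert s (insert y (insert (s * y) B))) := by
    constructor
    · intro a ha b hb hab
      rw [adj_iff]
      simp only [Finset.coe_insert, Set.mem_insert_iff, Finset.mem_coe, hB,
        Finset.mem_image] at ha hb
      have case3 : s * (s * y)⁻¹ ∈ S := by
        have := conjS' s y⁻¹ (invS y hyS)
        have he : s * y⁻¹ * s⁻¹ = s * (s * y)⁻¹ := by group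
        rwa [he] at this
      have case4 : ∀ v ∈ T, s * (s * v)⁻¹ ∈ S := by
        intro v hv
        have := conjS' s v⁻¹ (invS v (hTS v hv))
        have he : s * v⁻¹ * s⁻¹ = s * (s * v)⁻¹ := by group
        rwa [he] at this
      have case7 : y * (s * y)⁻¹ ∈ S := by
        have := invS s hsS
        have he : (s : G)⁻¹ = y * (s * y)⁻¹ := by group
        rwa [he] at this
      have case12 : ∀ v ∈ T, (s * y) * (s * v)⁻¹ ∈ S := by
        intro v hv
        have := conjS' s _ (hyT v hv)
        have he : s * (y * v⁻¹) * s⁻¹ = (s * y) * (s * v)⁻¹ := by group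
        rwa [he] at this
      rcases ha with ha' | ha' | ha' | ⟨u, hu, ha'⟩ <;>
        rcases hb with hb' | hb' | hb' | ⟨v, hv, hb'⟩
      · exact absurd (ha'.trans hb'.symm) hab
      · rw [ha', hb']; exact symmS _ _ hys
      · rw [ha', hb']; exact case3
      · rw [ha', ← hb']; exact case4 v hv
      · rw [ha', hb']; exact hys
      · exact absurd (ha'.trans hb'.symm) hab
      · rw [ha', hb']; exact case7
      · rw [ha', ← hb']; exact hyB v hv
      · rw [ha', hb']; exact symmS _ _ case3
      · rw [ha', hb']; exact symmS _ _ case7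
      · exact absurd (ha'.trans hb'.symm) hab
      · rw [ha', ← hb']; exact case12 v hv
      · rw [← ha', hb']; exact symmS _ _ (case4 u hu)
      · rw [← ha', hb']; exact symmS _ _ (hyB u hu)
      · rw [← ha', hb']; exact symmS _ _ (case12 u hu)
      · have huv : u ≠ v := by
          rintro rfl
          exact hab (ha'.symm.trans hb')
        rw [← ha', ← hb']
        have := conjS' s _ (hTadj u hu v hv huv)
        have he : s * (u * v⁻¹) * s⁻¹ = (s * u) * (s * v)⁻¹ := by group
        rwa [he] at this
    · rw [Finset.card_insert_of_notMem hs_notmem,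
        Finset.card_insert_of_notMem hy_notmem,
        Finset.card_insert_of_notMem hsy_notB, hBcard]
      omega
  exact hfree _ hK
end

section
/- If r is a tournament on a finite set V, then the number of automorphisms of (V, r) — permutations g of V such that for all x, y ∈ V, r(g x, g y) holds if and only if r(x, y) holds — is odd. -/
/-!
An automorphism `g` of order two moves some vertex `x` and swaps it with `y = g x`, so it maps
the edge between `x` and `y` to the edge between `y` and `x`; in a tournament exactly one of
these is an edge. Hence the automorphism group has no element of order two, and by Cauchy's
theorem its order is odd.
-/

theorem odd_natCard_of_forall_sq_eq_one {G : Type*} [Group G] [Finite G]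
    (h : ∀ g : G, g ^ 2 = 1 → g = 1) : Odd (Nat.card G) := by
  by_contra hodd
  rw [Nat.not_odd_iff_even, even_iff_two_dvd] at hodd
  obtain ⟨g, hg⟩ := exists_prime_orderOf_dvd_card' 2 hodd
  have hg1 : g = 1 := h g (hg ▸ pow_orderOf_eq_one g)
  rw [hg1, orderOf_one] at hg
  exact absurd hg (by norm_num)

namespace RelIso

variable {α : Type*} {r : α → α → Prop}

def equivPermSubtype (r : α → α → Prop) :
    (r ≃r r) ≃ {g : Equiv.Perm α // ∀ x y, r (g x) (g y) ↔ r x y} where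
  toFun f := ⟨f.toEquiv, fun _ _ => f.map_rel_iff⟩
  invFun g := ⟨g.1, g.2 _ _⟩
  left_inv _ := rfl
  right_inv _ := rfl

theorem eq_one_of_sq_eq_one (htot : ∀ x y, x ≠ y → (r x y ↔ ¬ r y x)) {f : r ≃r r}
    (hf : f ^ 2 = 1) : f = 1 := by
  ext x
  by_contra hx
  have hffx : f (f x) = x := by rw [← mul_apply, ← sq, hf, one_apply]
  have hswap : r (f x) x ↔ r x (f x) := by
    simpa only [hffx] using f.map_rel_iff (a := x) (b := f x)
  have hone := htot x (f x) (Ne.symm hx)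
  tauto

end RelIso

theorem tournament_card_aut_odd_general {V : Type} [Fintype V] (r : V → V → Prop)
    (htot : ∀ x y : V, x ≠ y → (r x y ↔ ¬ r y x)) :
    Odd (Nat.card {g : Equiv.Perm V // ∀ x y : V, r (g x) (g y) ↔ r x y}) := by
  have : Finite (r ≃r r) := .of_equiv _ (RelIso.equivPermSubtype r).symm
  rw [← Nat.card_congr (RelIso.equivPermSubtype r)]
  exact odd_natCard_of_forall_sq_eq_one fun _ => RelIso.eq_one_of_sq_eq_one htot

/-- The number of automorphisms of a finite tournament is odd. -/
theorem tournament_card_aut_odd {V : Type} [Fintype V] (r : V → V → Prop)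
    (hirr : ∀ x, ¬ r x x) (htot : ∀ x y : V, x ≠ y → (r x y ↔ ¬ r y x)) :
    Odd (Nat.card {g : Equiv.Perm V // ∀ x y : V, r (g x) (g y) ↔ r x y}) :=
  tournament_card_aut_odd_general r htot
end

section
/- For every tournament r on a set V there is a 2-colouring c : V → V → Bool of the arcs such that no 3-cycle of the tournament is monochromatic: for all x, y, z ∈ V with r(x, y), r(y, z) and r(z, x), the three values c(x, y), c(y, z), c(z, x) are not all equal. (This witnesses an explicit failure of the Ramsey property, with A a single arc and B a 3-cycle, for any Fraïssé class of rigid structures with a tournament reduct that does not have a total order as a reduct.) -/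
/-- Every tournament admits a 2-colouring of its arcs with no monochromatic 3-cycle;
this witnesses an explicit failure of the Ramsey property (with `A` an arc and `B` a
3-cycle) for Fraïssé classes of rigid structures with a tournament reduct and no total
order reduct. -/
theorem tournament_two_colouring_no_mono_threeCycle {V : Type*} (r : V → V → Prop)
    (hirr : ∀ x, ¬ r x x) (htot : ∀ x y : V, x ≠ y → (r x y ↔ ¬ r y x)) :
    ∃ c : V → V → Bool, ∀ x y z : V, r x y → r y z → r z x →
      ¬ (c x y = c y z ∧ c y z = c z x) := by
  classical
  let s := WellOrderingRel (α := V)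
  have htrans : Transitive s := (inferInstance : IsTrans V s).trans
  have hirr' : ∀ a : V, ¬ s a a := fun a => irrefl a
  have htri : ∀ a b : V, a ≠ b → s a b ∨ s b a := by
    intro a b hab
    rcases trichotomous_of s a b with h | h | h
    · exact Or.inl h
    · exact absurd h hab
    · exact Or.inr h
  refine ⟨fun x y => decide (s x y), ?_⟩
  intro x y z hxy hyz hzx ⟨h1, h2⟩
  simp only [] at h1 h2
  have hxyne : x ≠ y := fun h => hirr x (h ▸ hxy)
  have hyzne : y ≠ z := fun h => hirr y (h ▸ hyz)
  have hzxne : z ≠ x := fun h => hirr z (h ▸ hzx)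
  by_cases h : s x y
  · have e1 : decide (s x y) = true := by simpa using h
    have e2 : decide (s y z) = true := by rw [← h1]; exact e1
    have e3 : decide (s z x) = true := by rw [← h2, ← h1]; exact e1
    exact hirr' x (htrans (htrans h (of_decide_eq_true e2)) (of_decide_eq_true e3))
  · have e1 : decide (s x y) = false := by simpa using h
    have e2 : ¬ s y z := of_decide_eq_false (by rw [← h1]; exact e1)
    have e3 : ¬ s z x := of_decide_eq_false (by rw [← h2, ← h1]; exact e1)
    have h1' := (htri x y hxyne).resolve_left h
    have h2' := (htri y z hyzne).resolve_left e2
    have h3' := (htri z x hzxne).resolve_left e3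
    exact hirr' x (htrans (htrans h3' h2') h1')
end
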